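/- arXiv:2107.13785 — 8 statements merged into one kernel-verified Lean document; each statement's English description precedes it below -/
import Mathlib

section
/- Let N ≥ 1, let Ω be a nonempty open subset of the Euclidean space ℝ^N, and let a, b, c, λ ∈ ℂ with c ≠ 0 and λ ≠ 0. Suppose u, y : ℝ^N → ℂ with y four times continuously differentiable on Ω, and suppose that at every point of Ω the coupled eigenvalue equations λ²u − (a + λb)·Δu + cλ·y = 0 and λ²y − Δy − cλ·u = 0 hold. Then at every point of Ω one has (a + λb)·Δ(Δy) − ((1 + a)λ² + bλ³)·Δy + λ²(λ² + c²)·y = 0. -/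
open Complex

/-- The Laplacian of a function `f : ℝ^N → ℂ`, as the trace of the second derivative. -/
noncomputable def laplacian {N : ℕ} (f : EuclideanSpace ℝ (Fin N) → ℂ)
    (x : EuclideanSpace ℝ (Fin N)) : ℂ :=
  ∑ i : Fin N, fderiv ℝ (fderiv ℝ f) x (EuclideanSpace.single i 1) (EuclideanSpace.single i 1)

lemma laplacian_congr {N : ℕ} {f g : EuclideanSpace ℝ (Fin N) → ℂ}
    {x : EuclideanSpace ℝ (Fin N)} (h : f =ᶠ[nhds x] g) :
    laplacian f x = laplacian g x := by
  have h1 : fderiv ℝ f =ᶠ[nhds x] fderiv ℝ g := h.fderiv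
  have h2 : fderiv ℝ (fderiv ℝ f) x = fderiv ℝ (fderiv ℝ g) x := h1.fderiv_eq
  simp [laplacian, h2]

lemma laplacian_lin {N : ℕ} (α β : ℂ) (f g : EuclideanSpace ℝ (Fin N) → ℂ)
    (x : EuclideanSpace ℝ (Fin N))
    (hf : ContDiffAt ℝ 2 f x) (hg : ContDiffAt ℝ 2 g x) :
    laplacian (fun z => α * f z + β * g z) x = α * laplacian f x + β * laplacian g x := by
  have hf1 : ∀ᶠ z in nhds x, DifferentiableAt ℝ f z :=
    (hf.eventually (by norm_num)).mono fun z hz => hz.differentiableAt (by norm_num)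
  have hg1 : ∀ᶠ z in nhds x, DifferentiableAt ℝ g z :=
    (hg.eventually (by norm_num)).mono fun z hz => hz.differentiableAt (by norm_num)
  have key : fderiv ℝ (fun z => α * f z + β * g z) =ᶠ[nhds x]
      fun z => α • fderiv ℝ f z + β • fderiv ℝ g z := by
    filter_upwards [hf1, hg1] with z hfz hgz
    rw [fderiv_fun_add ((hfz.const_mul α) : DifferentiableAt ℝ (fun z => α * f z) z)
        ((hgz.const_mul β) : DifferentiableAt ℝ (fun z => β * g z) z),
      fderiv_const_mul hfz α, fderiv_const_mul hgz β]
  have h2f : DifferentiableAt ℝ (fderiv ℝ f) x :=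
    (hf.fderiv_right (m := 1) (le_refl _)).differentiableAt (by norm_num)
  have h2g : DifferentiableAt ℝ (fderiv ℝ g) x :=
    (hg.fderiv_right (m := 1) (le_refl _)).differentiableAt (by norm_num)
  have h2 : fderiv ℝ (fderiv ℝ (fun z => α * f z + β * g z)) x
      = α • fderiv ℝ (fderiv ℝ f) x + β • fderiv ℝ (fderiv ℝ g) x := by
    rw [key.fderiv_eq, fderiv_fun_add (f := fun z => α • fderiv ℝ f z) (g := fun z => β • fderiv ℝ g z)
        (h2f.const_smul α) (h2g.const_smul β),
      fderiv_fun_const_smul h2f α, fderiv_fun_const_smul h2g β]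
  simp [laplacian, h2, Finset.mul_sum, Finset.sum_add_distrib, smul_smul]

theorem stmt0 {N : ℕ} (hN : 1 ≤ N) (Ω : Set (EuclideanSpace ℝ (Fin N)))
    (hΩopen : IsOpen Ω) (hΩne : Ω.Nonempty)
    (a b c l : ℂ) (hc : c ≠ 0) (hl : l ≠ 0)
    (u y : EuclideanSpace ℝ (Fin N) → ℂ) (hy : ContDiffOn ℝ 4 y Ω)
    (heq1 : ∀ x ∈ Ω, l ^ 2 * u x - (a + l * b) * laplacian u x + c * l * y x = 0)
    (heq2 : ∀ x ∈ Ω, l ^ 2 * y x - laplacian y x - c * l * u x = 0) :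
    ∀ x ∈ Ω,
      (a + l * b) * laplacian (laplacian y) x
        - ((1 + a) * l ^ 2 + b * l ^ 3) * laplacian y x
        + l ^ 2 * (l ^ 2 + c ^ 2) * y x = 0 := by
  intro x hx
  have hxnhd : Ω ∈ nhds x := hΩopen.mem_nhds hx
  have hC4 : ContDiffAt ℝ 4 y x := hy.contDiffAt hxnhd
  -- laplacian y is C² at x
  have hLy : ContDiffAt ℝ 2 (laplacian y) x := by
    have h2 : ContDiffAt ℝ 2 (fderiv ℝ (fderiv ℝ y)) x :=
      (hC4.fderiv_right (m := 3) (by norm_num)).fderiv_right (m := 2) (by norm_num)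
    unfold laplacian
    apply ContDiffAt.sum
    intro i _
    exact (h2.clm_apply contDiffAt_const).clm_apply contDiffAt_const
  -- u agrees with a combination of y and laplacian y near x
  have hu_eq : u =ᶠ[nhds x]
      fun z => (l / c) * y z + (-(1 / (c * l))) * laplacian y z := by
    filter_upwards [hxnhd] with z hz
    have e' : c * l * u z = l ^ 2 * y z - laplacian y z := by
      linear_combination -heq2 z hz
    have hcl : c * l ≠ 0 := mul_ne_zero hc hl
    have hrw : l / c * y z + -(1 / (c * l)) * laplacian y z
        = (c * l)⁻¹ * (l ^ 2 * y z - laplacian y z) := by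
      field_simp
      ring
    rw [hrw, ← e', inv_mul_cancel_left₀ hcl]
  have hLu : laplacian u x
      = (l / c) * laplacian y x + (-(1 / (c * l))) * laplacian (laplacian y) x := by
    rw [laplacian_congr hu_eq]
    exact laplacian_lin _ _ _ _ _ (hC4.of_le (by norm_num)) hLy
  have hux : u x = (l / c) * y x + (-(1 / (c * l))) * laplacian y x := hu_eq.self_of_nhds
  have e1 := heq1 x hx
  rw [hux, hLu] at e1
  have key : c * ((a + l * b) * laplacian (laplacian y) x
        - ((1 + a) * l ^ 2 + b * l ^ 3) * laplacian y x
        + l ^ 2 * (l ^ 2 + c ^ 2) * y x) = 0 := by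
    field_simp at e1
    linear_combination c * e1
  exact (mul_eq_zero.mp key).resolve_left hc
end

section
/- Let N ≥ 1, let Ω be a nonempty open subset of ℝ^N, let a, b, c ∈ ℝ with c ≠ 0, let μ ∈ ℝ, and let λ ∈ ℂ with λ ≠ 0. Suppose u, y : ℝ^N → ℂ with y twice continuously differentiable on Ω, Δy = −μ²·y at every point of Ω, and y(x₀) ≠ 0 for some x₀ ∈ Ω. If at every point of Ω the coupled equations λ²u − (a + λb)·Δu + cλ·y = 0 and λ²y − Δy − cλ·u = 0 hold, then λ satisfies the characteristic equation λ⁴ + bμ²λ³ + ((1 + a)μ² + c²)λ² + bμ⁴λ + aμ⁴ = 0. -/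
open Complex

theorem stmt1 {N : ℕ} (hN : 1 ≤ N) (Ω : Set (EuclideanSpace ℝ (Fin N)))
    (hΩopen : IsOpen Ω) (hΩne : Ω.Nonempty)
    (a b c : ℝ) (hc : c ≠ 0) (μ : ℝ) (l : ℂ) (hl : l ≠ 0)
    (u y : EuclideanSpace ℝ (Fin N) → ℂ) (hy : ContDiffOn ℝ 2 y Ω)
    (heig : ∀ x ∈ Ω, laplacian y x = -(μ : ℂ) ^ 2 * y x)
    (hy0 : ∃ x₀ ∈ Ω, y x₀ ≠ 0)
    (heq1 : ∀ x ∈ Ω, l ^ 2 * u x - ((a : ℂ) + l * b) * laplacian u x + c * l * y x = 0)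
    (heq2 : ∀ x ∈ Ω, l ^ 2 * y x - laplacian y x - c * l * u x = 0) :
    l ^ 4 + (b : ℂ) * μ ^ 2 * l ^ 3 + ((1 + (a : ℂ)) * μ ^ 2 + (c : ℂ) ^ 2) * l ^ 2
      + (b : ℂ) * μ ^ 4 * l + (a : ℂ) * μ ^ 4 = 0 := by
  obtain ⟨x₀, hx₀, hy₀⟩ := hy0
  have hcl : (c : ℂ) * l ≠ 0 := mul_ne_zero (by exact_mod_cast hc) hl
  set k : ℂ := (l ^ 2 + (μ : ℂ) ^ 2) / ((c : ℂ) * l) with hk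
  -- u = k * y on Ω
  have hA : ∀ x ∈ Ω, u x = k * y x := by
    intro x hx
    have h2 := heq2 x hx
    rw [heig x hx] at h2
    rw [hk, div_mul_eq_mul_div, eq_div_iff hcl]
    linear_combination -h2
  have hyx : ∀ x ∈ Ω, DifferentiableAt ℝ y x := fun x hx =>
    (hy.contDiffAt (hΩopen.mem_nhds hx)).differentiableAt (by norm_num)
  have hfd : ∀ x ∈ Ω, fderiv ℝ u x = k • fderiv ℝ y x := by
    intro x hx
    have hev : u =ᶠ[nhds x] fun z => k * y z := by
      filter_upwards [hΩopen.mem_nhds hx] with z hz using hA z hz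
    rw [hev.fderiv_eq, fderiv_const_mul (hyx x hx)]
  have hev2 : fderiv ℝ u =ᶠ[nhds x₀] fun x => k • fderiv ℝ y x := by
    filter_upwards [hΩopen.mem_nhds hx₀] with z hz using hfd z hz
  have hdfy : DifferentiableAt ℝ (fderiv ℝ y) x₀ := by
    have h := (hy.contDiffAt (hΩopen.mem_nhds hx₀)).fderiv_right (m := 1) (by norm_num)
    exact h.differentiableAt one_ne_zero
  have h2nd : fderiv ℝ (fderiv ℝ u) x₀ = k • fderiv ℝ (fderiv ℝ y) x₀ := by
    rw [hev2.fderiv_eq, fderiv_fun_const_smul hdfy]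
  have hlap : laplacian u x₀ = k * laplacian y x₀ := by
    simp [laplacian, h2nd, Finset.mul_sum]
  have h1 := heq1 x₀ hx₀
  rw [hA x₀ hx₀, hlap, heig x₀ hx₀] at h1
  -- h1 : l ^ 2 * (k * y x₀) - (a + l*b) * (k * (-μ^2 * y x₀)) + c * l * y x₀ = 0
  have key : (l ^ 4 + (b : ℂ) * μ ^ 2 * l ^ 3 + ((1 + (a : ℂ)) * μ ^ 2 + (c : ℂ) ^ 2) * l ^ 2
      + (b : ℂ) * μ ^ 4 * l + (a : ℂ) * μ ^ 4) * y x₀ = 0 := by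
    have hkeq : k * ((c : ℂ) * l) = l ^ 2 + (μ : ℂ) ^ 2 := by
      rw [hk, div_mul_cancel₀ _ hcl]
    linear_combination ((c : ℂ) * l) * h1 - (l^2 * y x₀ + ((a:ℂ) + l * b) * (μ:ℂ)^2 * y x₀) * hkeq
  exact (mul_eq_zero.mp key).resolve_right hy₀
end

section
/- Let N ≥ 1, let Ω be a nonempty open subset of ℝ^N, let a, b, c ∈ ℝ with c ≠ 0, let μ ∈ ℝ, and let λ ∈ ℂ with λ ≠ 0. Suppose y : ℝ^N → ℂ is twice continuously differentiable on Ω and satisfies Δy = −μ²·y at every point of Ω. If λ⁴ + bμ²λ³ + ((1 + a)μ² + c²)λ² + bμ⁴λ + aμ⁴ = 0, then the function u := ((λ² + μ²)/(cλ))·y satisfies, at every point of Ω, the coupled equations λ²u − (a + λb)·Δu + cλ·y = 0 and λ²y − Δy − cλ·u = 0. -/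
open Complex

lemma laplacian_const_mul {N : ℕ} {Ω : Set (EuclideanSpace ℝ (Fin N))} (hΩopen : IsOpen Ω)
    {y : EuclideanSpace ℝ (Fin N) → ℂ} (hy : ContDiffOn ℝ 2 y Ω) (k : ℂ)
    {x : EuclideanSpace ℝ (Fin N)} (hx : x ∈ Ω) :
    laplacian (fun z => k * y z) x = k * laplacian y x := by
  have hev : (fun z => fderiv ℝ (fun w => k * y w) z) =ᶠ[nhds x]
      (fun z => k • fderiv ℝ y z) := by
    filter_upwards [hΩopen.mem_nhds hx] with z hz
    exact fderiv_const_mul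
      ((hy.differentiableOn two_ne_zero).differentiableAt (hΩopen.mem_nhds hz)) k
  have hdiff : DifferentiableAt ℝ (fderiv ℝ y) x := by
    have h2 : ContDiffAt ℝ 2 y x := hy.contDiffAt (hΩopen.mem_nhds hx)
    exact (h2.fderiv_right (m := 1) le_rfl).differentiableAt one_ne_zero
  have h1 : fderiv ℝ (fderiv ℝ (fun z => k * y z)) x
      = k • fderiv ℝ (fderiv ℝ y) x := by
    rw [hev.fderiv_eq]
    exact fderiv_const_smul hdiff k
  unfold laplacian
  rw [h1, Finset.mul_sum]
  simp

theorem stmt2 {N : ℕ} (hN : 1 ≤ N) (Ω : Set (EuclideanSpace ℝ (Fin N)))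
    (hΩopen : IsOpen Ω) (hΩne : Ω.Nonempty)
    (a b c : ℝ) (hc : c ≠ 0) (μ : ℝ) (l : ℂ) (hl : l ≠ 0)
    (y : EuclideanSpace ℝ (Fin N) → ℂ) (hy : ContDiffOn ℝ 2 y Ω)
    (heig : ∀ x ∈ Ω, laplacian y x = -(μ : ℂ) ^ 2 * y x)
    (hchar : l ^ 4 + (b : ℂ) * μ ^ 2 * l ^ 3 + ((1 + (a : ℂ)) * μ ^ 2 + (c : ℂ) ^ 2) * l ^ 2
      + (b : ℂ) * μ ^ 4 * l + (a : ℂ) * μ ^ 4 = 0) :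
    ∀ x ∈ Ω,
      (l ^ 2 * ((l ^ 2 + (μ : ℂ) ^ 2) / ((c : ℂ) * l) * y x)
        - ((a : ℂ) + l * b) * laplacian (fun z => (l ^ 2 + (μ : ℂ) ^ 2) / ((c : ℂ) * l) * y z) x
        + (c : ℂ) * l * y x = 0)
      ∧ (l ^ 2 * y x - laplacian y x
          - (c : ℂ) * l * ((l ^ 2 + (μ : ℂ) ^ 2) / ((c : ℂ) * l) * y x) = 0) := by
  intro x hx
  have hc' : (c : ℂ) ≠ 0 := by exact_mod_cast hc
  have hL := laplacian_const_mul hΩopen hy ((l ^ 2 + (μ : ℂ) ^ 2) / ((c : ℂ) * l)) hx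
  rw [hL, heig x hx]
  constructor
  · field_simp
    ring_nf
    ring_nf at hchar
    linear_combination y x * hchar
  · field_simp
    ring
end

section
/- Let a > 0, b > 0 and c ≠ 0 be real numbers, and let (μ_k) be a sequence of positive real numbers tending to +∞. Then there exist k₀ ∈ ℕ and two sequences (λ_{1,k})_{k ≥ k₀} and (λ_{2,k})_{k ≥ k₀} of complex numbers such that for every k ≥ k₀: λ_{1,k} and λ_{2,k} are simple roots of P_{μ_k} (i.e. P_{μ_k}(λ_{j,k}) = 0 and the derivative P'_{μ_k}(λ_{j,k}) ≠ 0 for j = 1, 2), and moreover μ_k²·(λ_{1,k} − i·μ_k) → −c²/(2b) and μ_k²·(λ_{2,k} + i·μ_k) → −c²/(2b) as k → ∞. In particular λ_{1,k} = i·μ_k − c²/(2b·μ_k²) + o(1/μ_k²) and λ_{2,k} = −i·μ_k − c²/(2b·μ_k²) + o(1/μ_k²). -/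
open Complex Filter

/-- The characteristic polynomial `P_μ(λ)` of the coupled elastic/viscoelastic wave system. -/
noncomputable def charP (a b c : ℝ) (μ : ℝ) (l : ℂ) : ℂ :=
  l ^ 4 + (b : ℂ) * μ ^ 2 * l ^ 3 + ((1 + (a : ℂ)) * μ ^ 2 + (c : ℂ) ^ 2) * l ^ 2
    + (b : ℂ) * μ ^ 4 * l + (a : ℂ) * μ ^ 4

section Auxiliary
open Polynomial


lemma charP_factor (a b c μ : ℝ) (l : ℂ) :
    charP a b c μ l = (l - I*μ)*((l + I*μ)*(l^2 + b*μ^2*l + a*μ^2)) + c^2*l^2 := by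
  unfold _root_.charP
  linear_combination ((μ:ℂ)^2 * (l^2 + b*μ^2*l + a*μ^2)) * Complex.I_sq

lemma root_eq {a b c μ : ℝ} {r : ℂ} (h : charP a b c μ r = 0) :
    (r - I*μ) * ((r + I*μ) * (r^2 + b*μ^2*r + a*μ^2)) = -(c:ℂ)^2*r^2 := by
  have h2 := charP_factor a b c μ r
  rw [h] at h2
  linear_combination -h2

lemma deriv_charP (a b c μ : ℝ) (l : ℂ) :
    deriv (charP a b c μ) l
      = 4*l^3 + 3*b*μ^2*l^2 + 2*((1+(a:ℂ))*μ^2+(c:ℂ)^2)*l + b*μ^4 := by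
  have h1 := hasDerivAt_pow 4 l
  have h2 := (hasDerivAt_pow 3 l).const_mul ((b:ℂ)*μ^2)
  have h3 := (hasDerivAt_pow 2 l).const_mul ((1+(a:ℂ))*μ^2+(c:ℂ)^2)
  have h4 := (hasDerivAt_id' l).const_mul ((b:ℂ)*μ^4)
  have h5 : HasDerivAt (fun _ : ℂ => (a:ℂ)*μ^4) 0 l := hasDerivAt_const _ _
  have H := (((h1.add h2).add h3).add h4).add h5
  exact H.deriv.trans (by push_cast; ring)

lemma charP_conj (a b c μ : ℝ) (l : ℂ) :
    charP a b c μ (starRingEnd ℂ l) = starRingEnd ℂ (charP a b c μ l) := by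
  simp only [_root_.charP, map_add, map_mul, map_pow, Complex.conj_ofReal, map_one]

lemma deriv_charP_conj (a b c μ : ℝ) (l : ℂ) :
    deriv (charP a b c μ) (starRingEnd ℂ l) = starRingEnd ℂ (deriv (charP a b c μ) l) := by
  rw [deriv_charP, deriv_charP]
  simp only [map_add, map_mul, map_pow, Complex.conj_ofReal, map_one, map_ofNat]

lemma multiset_norm_prod (s : Multiset ℂ) : ‖s.prod‖ = (s.map (fun z => ‖z‖)).prod := by
  induction s using Multiset.induction with
  | empty => simp
  | cons a s ih => simp [norm_mul, ih]

lemma multiset_pow_card_le_prod (s : Multiset ℝ) (t : ℝ) (ht : 0 ≤ t)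
    (h : ∀ x ∈ s, t ≤ x) : t ^ (Multiset.card s) ≤ s.prod := by
  induction s using Multiset.induction with
  | empty => simp
  | cons a s ih =>
    have ha := h a (Multiset.mem_cons_self a s)
    have ih' := ih (fun x hx => h x (Multiset.mem_cons_of_mem hx))
    simp only [Multiset.card_cons, Multiset.prod_cons, pow_succ]
    calc t ^ Multiset.card s * t ≤ s.prod * a := by
          apply mul_le_mul ih' ha ht (le_trans (pow_nonneg ht _) ih')
      _ = a * s.prod := mul_comm _ _

lemma exists_root_near (a b c : ℝ) (μ : ℝ) (hμ0 : 0 < μ) (hμ : 4*|c| < μ) :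
    ∃ r : ℂ, charP a b c μ r = 0 ∧ ‖r - I*μ‖ ≤ μ/2 := by
  set p : Polynomial ℂ := X^4 + C ((b:ℂ)*μ^2) * X^3 + C ((1+(a:ℂ))*μ^2 + (c:ℂ)^2) * X^2
      + C ((b:ℂ)*μ^4) * X + C ((a:ℂ)*μ^4) with hp
  have heval : ∀ x : ℂ, p.eval x = charP a b c μ x := by
    intro x; simp [hp, _root_.charP]
  have hmonic : p.Monic := by
    unfold p; monicity!
  have hsplits : p.Splits := IsAlgClosed.splits p
  have hdeg : p.natDegree = 4 := by
    unfold p; compute_degree!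
  have hcard : Multiset.card p.roots = 4 := by
    rw [← hdeg]; exact (Polynomial.splits_iff_card_roots.mp hsplits)
  have hIμ : p.eval (I*μ) = -(c:ℂ)^2*μ^2 := by
    rw [heval]
    unfold _root_.charP
    linear_combination (((I*(μ:ℂ))^2 + b*μ^2*(I*μ) + a*μ^2)*(μ:ℂ)^2 + (c:ℂ)^2*μ^2) * Complex.I_sq
  have hprod : p.eval (I*μ) = (p.roots.map fun r => (I*μ - r)).prod :=
    hsplits.eval_eq_prod_roots_of_monic hmonic _
  by_contra hcon
  push_neg at hcon
  have hfar : ∀ r ∈ p.roots, μ/2 ≤ ‖I*μ - r‖ := by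
    intro r hr
    have hroot : charP a b c μ r = 0 := by
      rw [← heval]; exact (Polynomial.mem_roots (hmonic.ne_zero)).mp hr
    rw [norm_sub_rev]; linarith [(hcon r hroot).le]
  have hnorm : ‖p.eval (I*μ)‖ = (p.roots.map fun r => ‖I*μ - r‖).prod := by
    rw [hprod, multiset_norm_prod, Multiset.map_map]
    rfl
  have hge : (μ/2)^4 ≤ (p.roots.map fun r => ‖I*μ - r‖).prod := by
    have := multiset_pow_card_le_prod (p.roots.map fun r => ‖I*μ - r‖) (μ/2)
      (by positivity) ?_
    · rwa [Multiset.card_map, hcard] at this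
    · intro x hx
      obtain ⟨r, hr, rfl⟩ := Multiset.mem_map.mp hx
      exact hfar r hr
  rw [hIμ] at hnorm
  have hvn : ‖-(c:ℂ)^2*(μ:ℂ)^2‖ = c^2*μ^2 := by
    rw [norm_mul, norm_neg, norm_pow, norm_pow, Complex.norm_real, Complex.norm_real]
    rw [Real.norm_eq_abs, Real.norm_eq_abs, _root_.sq_abs, _root_.sq_abs]
  rw [hvn] at hnorm
  rw [← hnorm] at hge
  have habs : 0 ≤ |c| := abs_nonneg c
  have h16 : 4*|c| * (4*|c|) < μ * μ := by
    apply mul_lt_mul'' hμ hμ (by positivity) (by positivity)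
  nlinarith [_root_.sq_abs c, mul_pos hμ0 hμ0]

lemma norm_I_mul_ofReal (μ : ℝ) (hμ : 0 ≤ μ) : ‖I*(μ:ℂ)‖ = μ := by
  rw [norm_mul, Complex.norm_I, Complex.norm_real, Real.norm_eq_abs, one_mul,
    _root_.abs_of_nonneg hμ]

lemma norm_real_mul {t : ℝ} (ht : 0 ≤ t) (z : ℂ) : ‖(t:ℂ)*z‖ = t*‖z‖ := by
  rw [norm_mul, Complex.norm_real, Real.norm_eq_abs, _root_.abs_of_nonneg ht]

lemma norm_add_lower (x y : ℂ) : ‖x‖ - ‖y‖ ≤ ‖x + y‖ := by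
  have h := norm_add_le (x + y) (-y)
  simp only [add_neg_cancel_right, norm_neg] at h
  linarith

lemma root_bound {a b c : ℝ} (ha : 0 < a) (hb : 0 < b) {μ : ℝ}
    (hμ1 : 1 ≤ μ) (hμ2 : (9 + 4*a)/b ≤ μ) {r : ℂ}
    (h0 : charP a b c μ r = 0) (h1 : ‖r - I*μ‖ ≤ μ/2) :
    ‖r - I*μ‖ ≤ 6*c^2/(b*μ^2) := by
  have hμ0 : (0:ℝ) < μ := by linarith
  have hIμ : ‖I*(μ:ℂ)‖ = μ := norm_I_mul_ofReal μ hμ0.le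
  set w := r - I*(μ:ℂ) with hw
  have hr_ub : ‖r‖ ≤ 3*μ/2 := by
    have : r = w + I*μ := by rw [hw]; ring
    rw [this]
    calc ‖w + I*(μ:ℂ)‖ ≤ ‖w‖ + ‖I*(μ:ℂ)‖ := norm_add_le _ _
      _ ≤ μ/2 + μ := by rw [hIμ]; linarith
      _ = 3*μ/2 := by ring
  have hr_lb : μ/2 ≤ ‖r‖ := by
    have h : I*(μ:ℂ) = r - w := by rw [hw]; ring
    have : ‖I*(μ:ℂ)‖ ≤ ‖r‖ + ‖w‖ := by rw [h]; exact norm_sub_le _ _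
    rw [hIμ] at this; linarith
  have hsum_lb : 3*μ/2 ≤ ‖r + I*μ‖ := by
    have h : r + I*(μ:ℂ) = w + 2*(I*μ) := by rw [hw]; ring
    have h2 : ‖(2:ℂ)*(I*μ)‖ - ‖w‖ ≤ ‖w + 2*(I*μ)‖ := by
      have := norm_sub_le (w + 2*(I*μ)) w
      simp only [add_sub_cancel_left] at this
      linarith [norm_add_le w (2*(I*(μ:ℂ)))]
    have h3 : ‖(2:ℂ)*(I*(μ:ℂ))‖ = 2*μ := by
      rw [norm_mul, hIμ]; norm_num
    rw [h]; rw [h3] at h2; linarith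
  have hQ_lb : b*μ^3/4 ≤ ‖r^2 + b*μ^2*r + a*μ^2‖ := by
    have h : r^2 + b*μ^2*r + a*μ^2 = (b:ℂ)*μ^2*r + (r^2 + a*μ^2) := by ring
    have h2 : ‖(b:ℂ)*μ^2*r‖ - ‖r^2 + (a:ℂ)*μ^2‖ ≤ ‖(b:ℂ)*μ^2*r + (r^2 + a*μ^2)‖ := by
      have t1 := norm_add_le ((b:ℂ)*μ^2*r + (r^2 + a*μ^2)) (-(r^2 + (a:ℂ)*μ^2))
      simp only [add_neg_cancel_right, norm_neg] at t1
      linarith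
    have h3 : ‖(b:ℂ)*μ^2*r‖ = b*μ^2*‖r‖ := by
      rw [norm_mul, norm_mul, norm_pow, Complex.norm_real, Complex.norm_real,
        Real.norm_eq_abs, Real.norm_eq_abs, _root_.abs_of_nonneg hb.le, _root_.sq_abs]
    have h4 : ‖r^2 + (a:ℂ)*μ^2‖ ≤ ‖r‖^2 + a*μ^2 := by
      calc ‖r^2 + (a:ℂ)*μ^2‖ ≤ ‖r^2‖ + ‖(a:ℂ)*μ^2‖ := norm_add_le _ _
        _ = ‖r‖^2 + a*μ^2 := by
            rw [norm_pow, norm_mul, norm_pow, Complex.norm_real, Complex.norm_real,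
              Real.norm_eq_abs, Real.norm_eq_abs, _root_.abs_of_nonneg ha.le, _root_.sq_abs]
    rw [h]
    have h5 : b*μ^2*(μ/2) ≤ b*μ^2*‖r‖ := by
      apply mul_le_mul_of_nonneg_left hr_lb (by positivity)
    have h6 : ‖r‖^2 ≤ (3*μ/2)^2 := by
      apply pow_le_pow_left₀ (norm_nonneg r) hr_ub
    have h7 : (9 + 4*a) ≤ b * μ := by
      rw [div_le_iff₀ hb] at hμ2; linarith
    have h8 : (9 + 4*a)*μ^2 ≤ b*μ*μ^2 := by nlinarith [sq_nonneg μ]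
    nlinarith
  have hkey : ‖w‖ * (‖r + I*(μ:ℂ)‖ * ‖r^2 + b*μ^2*r + a*μ^2‖) = c^2 * ‖r‖^2 := by
    have := congrArg norm (root_eq h0)
    rw [norm_mul, norm_mul] at this
    rw [hw]
    rw [this]
    rw [norm_mul, norm_neg, norm_pow, norm_pow, Complex.norm_real, Real.norm_eq_abs,
      _root_.sq_abs]
  have hwn : 0 ≤ ‖w‖ := norm_nonneg w
  rw [le_div_iff₀ (by positivity)]
  have e1 : c^2*‖r‖^2 ≤ c^2*(3*μ/2)^2 :=
    mul_le_mul_of_nonneg_left (pow_le_pow_left₀ (norm_nonneg r) hr_ub 2) (sq_nonneg c)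
  have e2 : ‖w‖ * ((3*μ/2) * (b*μ^3/4)) ≤ ‖w‖ * (‖r + I*(μ:ℂ)‖ * ‖r^2 + b*μ^2*r + a*μ^2‖) := by
    apply mul_le_mul_of_nonneg_left _ hwn
    apply mul_le_mul hsum_lb hQ_lb (by positivity) (norm_nonneg _)
  have e3 : ‖w‖ * ((3*μ/2) * (b*μ^3/4)) ≤ c^2*(3*μ/2)^2 := by
    calc ‖w‖ * ((3*μ/2) * (b*μ^3/4)) ≤ _ := e2
      _ = c^2*‖r‖^2 := hkey
      _ ≤ c^2*(3*μ/2)^2 := e1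
  have e5 : ‖w‖*(b*μ^2) * (3*μ^2/8) ≤ 6*c^2*(3*μ^2/8) := by
    calc ‖w‖*(b*μ^2)*(3*μ^2/8) = ‖w‖*((3*μ/2)*(b*μ^3/4)) := by ring
      _ ≤ c^2*(3*μ/2)^2 := e3
      _ = 6*c^2*(3*μ^2/8) := by ring
  exact le_of_mul_le_mul_right e5 (by positivity)

lemma deriv_ne_zero {a b c : ℝ} (ha : 0 < a) (hb : 0 < b) {μ : ℝ}
    (hμ1 : 7 ≤ μ) (hμ2 : (36 + 4*a + 4*c^2)/b < μ) {r : ℂ}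
    (h1 : ‖r - I*μ‖ ≤ 1) :
    deriv (charP a b c μ) r ≠ 0 := by
  rw [deriv_charP]
  have hμ0 : (0:ℝ) < μ := by linarith
  set w := r - I*(μ:ℂ) with hw
  have hIμ : ‖I*(μ:ℂ)‖ = μ := norm_I_mul_ofReal μ hμ0.le
  have hr_ub : ‖r‖ ≤ μ + 1 := by
    have hre : r = w + I*μ := by rw [hw]; ring
    calc ‖r‖ = ‖w + I*(μ:ℂ)‖ := by rw [← hre]
      _ ≤ ‖w‖ + ‖I*(μ:ℂ)‖ := norm_add_le _ _
      _ ≤ 1 + μ := by rw [hIμ]; linarith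
      _ = μ + 1 := by ring
  have hmain : b*μ^2*μ^2 ≤ ‖((b*μ^2:ℝ):ℂ)*(3*r^2 + μ^2)‖ := by
    rw [norm_real_mul (by positivity)]
    have hid : 3*r^2 + (μ:ℂ)^2 = (-(((2*μ^2:ℝ)):ℂ)) + (6*I*μ*w + 3*w^2) := by
      rw [hw]; push_cast
      linear_combination (3*(μ:ℂ)^2) * Complex.I_sq
    rw [hid]
    have t1 : ‖(-(((2*μ^2:ℝ)):ℂ))‖ - ‖6*I*μ*w + 3*w^2‖ ≤ ‖(-(((2*μ^2:ℝ)):ℂ)) + (6*I*μ*w + 3*w^2)‖ :=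
      norm_add_lower _ _
    have t2 : ‖(-(((2*μ^2:ℝ)):ℂ))‖ = 2*μ^2 := by
      rw [norm_neg, Complex.norm_real, Real.norm_eq_abs, _root_.abs_of_nonneg (by positivity)]
    have t3 : ‖6*I*(μ:ℂ)*w + 3*w^2‖ ≤ 6*μ*‖w‖ + 3*‖w‖^2 := by
      calc ‖6*I*(μ:ℂ)*w + 3*w^2‖ ≤ ‖6*I*(μ:ℂ)*w‖ + ‖3*w^2‖ := norm_add_le _ _
        _ = 6*μ*‖w‖ + 3*‖w‖^2 := by
            rw [show (6:ℂ)*I*(μ:ℂ)*w = I*(((6*μ:ℝ):ℂ)*w) by push_cast; ring,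
              norm_mul, Complex.norm_I, one_mul, norm_real_mul (by positivity),
              show (3:ℂ)*w^2 = ((3:ℝ):ℂ)*w^2 by push_cast; ring,
              norm_real_mul (by norm_num), norm_pow]
    have t4 : 6*μ*‖w‖ + 3*‖w‖^2 ≤ 6*μ + 3 := by
      have h2 : ‖w‖^2 ≤ 1 := by nlinarith [norm_nonneg w]
      nlinarith [norm_nonneg w]
    have hb2 : (0:ℝ) ≤ b*μ^2 := by positivity
    have : μ^2 ≤ 2*μ^2 - (6*μ + 3) := by nlinarith
    have hlow : μ^2 ≤ ‖(-(((2*μ^2:ℝ)):ℂ)) + (6*I*μ*w + 3*w^2)‖ := by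
      rw [t2] at t1; linarith
    calc b*μ^2*μ^2 ≤ b*μ^2*‖(-(((2*μ^2:ℝ)):ℂ)) + (6*I*μ*w + 3*w^2)‖ :=
          mul_le_mul_of_nonneg_left hlow hb2
      _ = _ := rfl
  have hE : ‖4*r^3 + ((2*((1+a)*μ^2+c^2):ℝ):ℂ)*r‖ ≤ 4*(μ+1)^3 + 2*((1+a)*μ^2+c^2)*(μ+1) := by
    calc ‖4*r^3 + ((2*((1+a)*μ^2+c^2):ℝ):ℂ)*r‖
        ≤ ‖4*r^3‖ + ‖((2*((1+a)*μ^2+c^2):ℝ):ℂ)*r‖ := norm_add_le _ _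
      _ = 4*‖r‖^3 + (2*((1+a)*μ^2+c^2))*‖r‖ := by
          rw [show (4:ℂ)*r^3 = ((4:ℝ):ℂ)*r^3 by push_cast; ring,
            norm_real_mul (by norm_num), norm_pow, norm_real_mul (by positivity)]
      _ ≤ 4*(μ+1)^3 + 2*((1+a)*μ^2+c^2)*(μ+1) := by
          have h3 : ‖r‖^3 ≤ (μ+1)^3 := pow_le_pow_left₀ (norm_nonneg r) hr_ub 3
          have h4 : (2*((1+a)*μ^2+c^2))*‖r‖ ≤ (2*((1+a)*μ^2+c^2))*(μ+1) :=
            mul_le_mul_of_nonneg_left hr_ub (by positivity)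
          linarith
  have hsplit : 4*r^3 + 3*(b:ℂ)*μ^2*r^2 + 2*((1+(a:ℂ))*μ^2+(c:ℂ)^2)*r + (b:ℂ)*μ^4
      = ((b*μ^2:ℝ):ℂ)*(3*r^2 + μ^2) + (4*r^3 + ((2*((1+a)*μ^2+c^2):ℝ):ℂ)*r) := by
    push_cast; ring
  rw [hsplit]
  intro hzero
  have hlow := norm_add_lower (((b*μ^2:ℝ):ℂ)*(3*r^2 + μ^2)) (4*r^3 + ((2*((1+a)*μ^2+c^2):ℝ):ℂ)*r)
  rw [hzero, norm_zero] at hlow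
  have hfin : b*μ^2*μ^2 ≤ 4*(μ+1)^3 + 2*((1+a)*μ^2+c^2)*(μ+1) := by linarith
  have hbμ : 36 + 4*a + 4*c^2 < b*μ := by
    rw [div_lt_iff₀ hb] at hμ2; linarith
  have hμ3 : (0:ℝ) < μ^3 := by positivity
  have hkey : (36 + 4*a + 4*c^2)*μ^3 < b*μ*μ^3 := mul_lt_mul_of_pos_right hbμ hμ3
  have h7a : 7*μ^2 ≤ μ^3 := by nlinarith [sq_nonneg μ]
  have h7b : 7*μ ≤ μ^2 := by nlinarith
  have hca : 0 ≤ a*(μ^3 - μ^2) := by nlinarith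
  have hcc : 0 ≤ c^2*(μ^3 - μ) := by nlinarith [sq_nonneg c]
  nlinarith [sq_nonneg c]

end Auxiliary

theorem stmt3 (a b c : ℝ) (ha : 0 < a) (hb : 0 < b) (hc : c ≠ 0)
    (μ : ℕ → ℝ) (hμpos : ∀ k, 0 < μ k) (hμ : Tendsto μ atTop atTop) :
    ∃ k₀ : ℕ, ∃ l₁ l₂ : ℕ → ℂ,
      (∀ k ≥ k₀,
        charP a b c (μ k) (l₁ k) = 0 ∧ deriv (charP a b c (μ k)) (l₁ k) ≠ 0 ∧
        charP a b c (μ k) (l₂ k) = 0 ∧ deriv (charP a b c (μ k)) (l₂ k) ≠ 0) ∧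
      Tendsto (fun k => ((μ k : ℂ)) ^ 2 * (l₁ k - Complex.I * (μ k : ℂ))) atTop
        (nhds (-(c : ℂ) ^ 2 / (2 * (b : ℂ)))) ∧
      Tendsto (fun k => ((μ k : ℂ)) ^ 2 * (l₂ k + Complex.I * (μ k : ℂ))) atTop
        (nhds (-(c : ℂ) ^ 2 / (2 * (b : ℂ)))) := by
  classical
  set M : ℝ := max (max (4*|c| + 1) 7)
      (max ((9+4*a)/b) (max (6*c^2/b + 1) ((36+4*a+4*c^2)/b + 1))) with hMdef
  have hM1 : 4*|c| + 1 ≤ M := le_trans (le_max_left _ _) (le_max_left _ _)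
  have hM2 : 7 ≤ M := le_trans (le_max_right _ _) (le_max_left _ _)
  have hM3 : (9+4*a)/b ≤ M := le_trans (le_max_left _ _) (le_max_right _ _)
  have hM4 : 6*c^2/b + 1 ≤ M :=
    le_trans (le_trans (le_max_left _ _) (le_max_right _ _)) (le_max_right _ _)
  have hM5 : (36+4*a+4*c^2)/b + 1 ≤ M :=
    le_trans (le_trans (le_max_right _ _) (le_max_right _ _)) (le_max_right _ _)
  have hev : ∀ᶠ k in atTop, M ≤ μ k := hμ.eventually_ge_atTop M
  -- the chooser
  set l₁ : ℕ → ℂ := fun k =>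
    if h : ∃ r : ℂ, charP a b c (μ k) r = 0 ∧ ‖r - I*(μ k)‖ ≤ (μ k)/2 then h.choose else 0
    with hl₁
  set l₂ : ℕ → ℂ := fun k => starRingEnd ℂ (l₁ k) with hl₂
  have hroot : ∀ k, M ≤ μ k →
      charP a b c (μ k) (l₁ k) = 0 ∧ ‖l₁ k - I*(μ k)‖ ≤ (μ k)/2 := by
    intro k hk
    have h : ∃ r : ℂ, charP a b c (μ k) r = 0 ∧ ‖r - I*(μ k)‖ ≤ (μ k)/2 := by
      apply exists_root_near a b c (μ k) (hμpos k)
      linarith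
    simp only [hl₁, dif_pos h]
    exact h.choose_spec
  have hbnd : ∀ k, M ≤ μ k → ‖l₁ k - I*(μ k)‖ ≤ 6*c^2/(b*(μ k)^2) := by
    intro k hk
    exact root_bound ha hb (by linarith) (by linarith) (hroot k hk).1 (hroot k hk).2
  have hle1 : ∀ k, M ≤ μ k → ‖l₁ k - I*(μ k)‖ ≤ 1 := by
    intro k hk
    refine le_trans (hbnd k hk) ?_
    have hμk := hμpos k
    rw [div_le_one (by positivity)]
    have h1 : 6*c^2/b ≤ μ k := by linarith
    rw [div_le_iff₀ hb] at h1
    have h2 : (1:ℝ) ≤ μ k := by linarith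
    nlinarith [hμpos k]
  have hd1 : ∀ k, M ≤ μ k → deriv (charP a b c (μ k)) (l₁ k) ≠ 0 := by
    intro k hk
    exact deriv_ne_zero ha hb (by linarith) (by linarith) (hle1 k hk)
  -- limits setup
  have hμsq : Tendsto (fun k => (μ k)^2) atTop atTop := by
    simpa [pow_two] using hμ.atTop_mul_atTop₀ hμ
  have hbound0 : Tendsto (fun k => 6*c^2/(b*(μ k)^2)) atTop (nhds 0) :=
    Tendsto.div_atTop tendsto_const_nhds (Tendsto.const_mul_atTop hb hμsq)
  have hw0 : Tendsto (fun k => l₁ k - I*(μ k:ℂ)) atTop (nhds 0) := by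
    apply squeeze_zero_norm' (hev.mono fun k hk => hbnd k hk) hbound0
  have hinv : Tendsto (fun k => ((μ k:ℂ))⁻¹) atTop (nhds 0) := by
    have h := (Complex.continuous_ofReal.tendsto (0:ℝ)).comp hμ.inv_tendsto_atTop
    simpa [Function.comp_def, Complex.ofReal_inv] using h
  have hμne : ∀ k, ((μ k:ℝ):ℂ) ≠ 0 := fun k => by
    exact_mod_cast (hμpos k).ne'
  have hquot : Tendsto (fun k => l₁ k / (μ k:ℂ)) atTop (nhds I) := by
    have hfun : ∀ k, l₁ k / (μ k:ℂ) = I + (l₁ k - I*(μ k:ℂ)) * ((μ k:ℂ))⁻¹ := by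
      intro k; field_simp [hμne k]; ring
    have := (tendsto_const_nhds (x := I) (f := atTop)).add (hw0.mul hinv)
    simp only [mul_zero, add_zero] at this
    exact this.congr (fun k => (hfun k).symm)
  have hQ : Tendsto (fun k =>
      ((l₁ k)^2 + (b:ℂ)*(μ k:ℂ)^2*(l₁ k) + (a:ℂ)*(μ k:ℂ)^2) / (μ k:ℂ)^3) atTop
      (nhds ((b:ℂ)*I)) := by
    have hfun : ∀ k, ((l₁ k)^2 + (b:ℂ)*(μ k:ℂ)^2*(l₁ k) + (a:ℂ)*(μ k:ℂ)^2) / (μ k:ℂ)^3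
        = (l₁ k/(μ k:ℂ))^2 * ((μ k:ℂ))⁻¹ + (b:ℂ)*(l₁ k/(μ k:ℂ)) + (a:ℂ)*((μ k:ℂ))⁻¹ := by
      intro k; field_simp [hμne k]
    have h := (((hquot.pow 2).mul hinv).add
        ((tendsto_const_nhds (x := (b:ℂ))).mul hquot)).add
        ((tendsto_const_nhds (x := (a:ℂ))).mul hinv)
    simp only [mul_zero, zero_add, add_zero] at h
    exact (h.congr (fun k => (hfun k).symm))
  set F : ℕ → ℂ := fun k => (l₁ k/(μ k:ℂ) + I) *
      (((l₁ k)^2 + (b:ℂ)*(μ k:ℂ)^2*(l₁ k) + (a:ℂ)*(μ k:ℂ)^2) / (μ k:ℂ)^3) with hF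
  set f : ℕ → ℂ := fun k => -(c:ℂ)^2 * (l₁ k/(μ k:ℂ))^2 with hf
  have hFt : Tendsto F atTop (nhds (-2*(b:ℂ))) := by
    have h := (hquot.add (tendsto_const_nhds (x := I))).mul hQ
    have : (I + I) * ((b:ℂ)*I) = -2*(b:ℂ) := by
      linear_combination (2*(b:ℂ)) * Complex.I_sq
    rwa [this] at h
  have hft : Tendsto f atTop (nhds ((c:ℂ)^2)) := by
    have h := (tendsto_const_nhds (x := -(c:ℂ)^2) (f := atTop)).mul (hquot.pow 2)
    have : -(c:ℂ)^2 * I^2 = (c:ℂ)^2 := by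
      linear_combination (-(c:ℂ)^2) * Complex.I_sq
    rwa [this] at h
  have hFne : ∀ᶠ k in atTop, F k ≠ 0 :=
    hFt.eventually_ne (by simp [hb.ne'])
  have hdiv : Tendsto (fun k => f k / F k) atTop (nhds (-(c:ℂ)^2/(2*(b:ℂ)))) := by
    have h := hft.div hFt (by
      intro h0
      have hb0 : (b:ℂ) = 0 := by linear_combination (-1/2 : ℂ) * h0
      exact hb.ne' (by exact_mod_cast hb0))
    have he : (c:ℂ)^2 / (-2*(b:ℂ)) = -(c:ℂ)^2/(2*(b:ℂ)) := by ring
    rw [he] at h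
    exact h
  have heq : ∀ᶠ k in atTop, (μ k:ℂ)^2 * (l₁ k - I*(μ k:ℂ)) = f k / F k := by
    filter_upwards [hev, hFne] with k hk hFk
    have hrid := root_eq (hroot k hk).1
    rw [eq_div_iff hFk]
    rw [hF, hf]
    field_simp [hμne k]
    linear_combination hrid
  have hlim1 : Tendsto (fun k => ((μ k : ℂ)) ^ 2 * (l₁ k - I * (μ k : ℂ))) atTop
      (nhds (-(c : ℂ) ^ 2 / (2 * (b : ℂ)))) := hdiv.congr' (Filter.EventuallyEq.symm heq)
  -- conjugate limit
  have hlim2 : Tendsto (fun k => ((μ k : ℂ)) ^ 2 * (l₂ k + I * (μ k : ℂ))) atTop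
      (nhds (-(c : ℂ) ^ 2 / (2 * (b : ℂ)))) := by
    have hconjfun : ∀ k, (μ k:ℂ)^2 * (l₂ k + I*(μ k:ℂ))
        = starRingEnd ℂ ((μ k:ℂ)^2 * (l₁ k - I*(μ k:ℂ))) := by
      intro k
      simp only [hl₂, map_mul, map_sub, map_pow, Complex.conj_ofReal, Complex.conj_I]
      ring
    have h := ((Complex.continuous_conj.tendsto _).comp hlim1)
    have hval : starRingEnd ℂ (-(c:ℂ)^2/(2*(b:ℂ))) = -(c:ℂ)^2/(2*(b:ℂ)) := by
      simp [map_div₀, map_ofNat, Complex.conj_ofReal]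
    rw [Function.comp_def] at h
    rw [hval] at h
    exact h.congr (fun k => (hconjfun k).symm)
  -- conclude
  obtain ⟨k₀, hk₀⟩ := eventually_atTop.mp hev
  refine ⟨k₀, l₁, l₂, ?_, hlim1, hlim2⟩
  intro k hk
  have hMk := hk₀ k hk
  refine ⟨(hroot k hMk).1, hd1 k hMk, ?_, ?_⟩
  · rw [hl₂]
    simp only
    rw [charP_conj, (hroot k hMk).1, map_zero]
  · rw [hl₂]
    simp only
    rw [deriv_charP_conj]
    intro h0
    exact hd1 k hMk (by simpa using congrArg (starRingEnd ℂ) h0)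
end

section
/- Let a > 0, b > 0 and c ∈ ℝ. For ζ > 0 define the quartic polynomial h_ζ(ξ) = ζ·ξ⁴ + b·ξ³ + ((1 + a)·ζ + c²·ζ³)·ξ² + b·ξ + a·ζ in the complex variable ξ. Then there exist constants K > 0 and ζ₀ > 0 such that for every ζ with 0 < ζ ≤ ζ₀: the polynomial h_ζ has exactly one root in the closed disc {ξ ∈ ℂ : |ξ − i| ≤ K·ζ}, and this root is a simple root of h_ζ; likewise h_ζ has exactly one root in the closed disc {ξ ∈ ℂ : |ξ + i| ≤ K·ζ}, and this root is simple. -/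
open Complex

/-- The rescaled characteristic polynomial `h_ζ(ξ)` of the coupled system. -/
noncomputable def hpoly (a b c : ℝ) (ζ : ℝ) (ξ : ℂ) : ℂ :=
  (ζ : ℂ) * ξ ^ 4 + (b : ℂ) * ξ ^ 3 + ((1 + (a : ℂ)) * ζ + (c : ℂ) ^ 2 * (ζ : ℂ) ^ 3) * ξ ^ 2
    + (b : ℂ) * ξ + (a : ℂ) * ζ

open Polynomial

noncomputable def Ppoly (a b c ζ : ℝ) : Polynomial ℂ :=
  C (ζ:ℂ) * X^4 + C (b:ℂ) * X^3 + C ((1 + (a:ℂ)) * ζ + (c:ℂ)^2 * (ζ:ℂ)^3) * X^2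
    + C (b:ℂ) * X + C ((a:ℂ) * ζ)

lemma eval_Ppoly (a b c ζ : ℝ) (ξ : ℂ) : (Ppoly a b c ζ).eval ξ = hpoly a b c ζ ξ := by
  simp [Ppoly, hpoly]

lemma natDegree_Ppoly (a b c ζ : ℝ) (hζ : ζ ≠ 0) : (Ppoly a b c ζ).natDegree = 4 := by
  unfold Ppoly
  compute_degree
  all_goals simp [coeff_mul_X_pow', coeff_C, coeff_one, ← map_mul, ← map_add, hζ]

lemma leadingCoeff_Ppoly (a b c ζ : ℝ) (hζ : ζ ≠ 0) : (Ppoly a b c ζ).leadingCoeff = (ζ:ℂ) := by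
  rw [Polynomial.leadingCoeff, natDegree_Ppoly a b c ζ hζ]
  simp [Ppoly, coeff_X, coeff_one, coeff_mul_X_pow', coeff_C, ← map_mul, ← map_add]

lemma deriv_hpoly (a b c ζ : ℝ) (ξ : ℂ) :
    deriv (hpoly a b c ζ) ξ = (ζ:ℂ) * (ξ^3 + ξ^2*ξ + ξ*ξ^2 + ξ^3)
      + (b:ℂ) * (ξ^2 + ξ*ξ + ξ^2) + ((1 + (a:ℂ)) * ζ + (c:ℂ)^2 * (ζ:ℂ)^3) * (ξ + ξ) + b := by
  have h : hpoly a b c ζ = fun x => (Ppoly a b c ζ).eval x := by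
    funext x; rw [eval_Ppoly]
  rw [h, Polynomial.deriv]
  simp only [Ppoly, derivative_add, derivative_C_mul, derivative_C, derivative_X_pow,
    derivative_X, eval_add, eval_mul, eval_C, eval_pow, eval_X, eval_natCast, eval_one, eval_zero]
  push_cast
  ring

lemma hpoly_I (a b c ζ : ℝ) : hpoly a b c ζ I = -((c:ℂ)^2 * (ζ:ℂ)^3) := by
  have hI2 : (I:ℂ)^2 = -1 := Complex.I_sq
  unfold hpoly
  linear_combination ((ζ:ℂ)*(I^2-1) + ((1+(a:ℂ))*(ζ:ℂ) + (c:ℂ)^2*(ζ:ℂ)^3) + (b:ℂ)*I) * hI2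

lemma hpoly_sub (a b c ζ : ℝ) (ξ η : ℂ) :
    hpoly a b c ζ ξ - hpoly a b c ζ η = (ξ - η) *
      ((ζ:ℂ) * (ξ^3 + ξ^2*η + ξ*η^2 + η^3) + (b:ℂ) * (ξ^2 + ξ*η + η^2)
        + ((1 + (a:ℂ)) * ζ + (c:ℂ)^2 * (ζ:ℂ)^3) * (ξ + η) + b) := by
  unfold hpoly; ring

lemma hpoly_conj (a b c ζ : ℝ) (ξ : ℂ) :
    hpoly a b c ζ ((starRingEnd ℂ) ξ) = (starRingEnd ℂ) (hpoly a b c ζ ξ) := by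
  simp [hpoly]

lemma abs_multiset_prod (s : Multiset ℂ) : norm s.prod = (s.map norm).prod := by
  induction s using Multiset.induction with
  | empty => simp
  | cons x t ih => simp [Multiset.prod_cons, norm_mul, ih]

lemma pow_card_le_prod_real (s : Multiset ℝ) (a : ℝ) (ha : 0 ≤ a)
    (h : ∀ x ∈ s, a ≤ x) : a ^ (Multiset.card s) ≤ s.prod := by
  induction s using Multiset.induction with
  | empty => simp
  | cons x t ih =>
    simp only [Multiset.prod_cons, Multiset.card_cons, pow_succ]
    have hx : a ≤ x := h x (Multiset.mem_cons_self x t)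
    have ht : a ^ (Multiset.card t) ≤ t.prod := ih fun y hy => h y (Multiset.mem_cons_of_mem hy)
    calc a ^ Multiset.card t * a ≤ t.prod * x :=
          mul_le_mul ht hx ha (le_trans (pow_nonneg ha _) ht)
      _ = x * t.prod := mul_comm _ _

lemma xi_plus_I_eq (ξ η : ℂ) : ξ^2 + 1 = (ξ - I) * (ξ + I) := by
  linear_combination Complex.I_sq

lemma xi_eta_eq (ξ η : ℂ) : ξ*η + 1 = ξ*(η - I) + I*(ξ - I) := by
  linear_combination Complex.I_sq

lemma Qlb (a b c : ℝ) (ha : 0 < a) (hb : 0 < b) (ζ : ℝ) (ξ η : ℂ)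
    (hζ0 : 0 < ζ) (hζ1 : ζ ≤ 1) (hζ2 : ζ * (32 + 4*(1+a+c^2)) ≤ b/2)
    (hξ : norm (ξ - I) ≤ 1/18) (hη : norm (η - I) ≤ 1/18) :
    b ≤ norm ((ζ:ℂ) * (ξ^3 + ξ^2*η + ξ*η^2 + η^3) + (b:ℂ) * (ξ^2 + ξ*η + η^2)
      + ((1 + (a:ℂ)) * ζ + (c:ℂ)^2 * (ζ:ℂ)^3) * (ξ + η) + b) := by
  set Q : ℂ := (ζ:ℂ) * (ξ^3 + ξ^2*η + ξ*η^2 + η^3) + (b:ℂ) * (ξ^2 + ξ*η + η^2)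
      + ((1 + (a:ℂ)) * ζ + (c:ℂ)^2 * (ζ:ℂ)^3) * (ξ + η) + b with hQ
  set E : ℂ := (ζ:ℂ) * (ξ^3 + ξ^2*η + ξ*η^2 + η^3)
      + (b:ℂ) * ((ξ^2+1) + (ξ*η+1) + (η^2+1))
      + ((1 + (a:ℂ)) * ζ + (c:ℂ)^2 * (ζ:ℂ)^3) * (ξ + η) with hE
  have hQE : Q = -2*(b:ℂ) + E := by rw [hQ, hE]; ring
  -- basic bounds
  have hx2 : norm ξ ≤ 2 := by
    calc norm ξ = norm ((ξ - I) + I) := by rw [sub_add_cancel]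
      _ ≤ norm (ξ - I) + norm I := norm_add_le _ _
      _ ≤ 1/18 + 1 := by rw [Complex.norm_I]; linarith
      _ ≤ 2 := by norm_num
  have hy2 : norm η ≤ 2 := by
    calc norm η = norm ((η - I) + I) := by rw [sub_add_cancel]
      _ ≤ norm (η - I) + norm I := norm_add_le _ _
      _ ≤ 1/18 + 1 := by rw [Complex.norm_I]; linarith
      _ ≤ 2 := by norm_num
  -- Σ bound
  have hSig : norm (ξ^3 + ξ^2*η + ξ*η^2 + η^3) ≤ 32 := by
    have t1 := norm_add_le (ξ^3 + ξ^2*η + ξ*η^2) (η^3)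
    have t2 := norm_add_le (ξ^3 + ξ^2*η) (ξ*η^2)
    have t3 := norm_add_le (ξ^3) (ξ^2*η)
    simp only [norm_mul, norm_pow] at t1 t2 t3
    have hx0 := norm_nonneg ξ
    have hy0 := norm_nonneg η
    nlinarith [norm_nonneg (ξ^3 + ξ^2*η + ξ*η^2), norm_nonneg (ξ^3 + ξ^2*η)]
  -- middle bound
  have hm1 : norm (ξ^2 + 1) ≤ 1/6 := by
    rw [xi_plus_I_eq ξ η, norm_mul]
    have h1 : norm (ξ + I) ≤ 3 := by
      calc norm (ξ + I) = norm ((ξ - I) + 2*I) := by congr 1; ring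
        _ ≤ norm (ξ - I) + norm (2*I) := norm_add_le _ _
        _ ≤ 1/18 + 2 := by
            simp only [norm_mul, Complex.norm_I, Complex.norm_two]
            linarith
        _ ≤ 3 := by norm_num
    calc norm (ξ - I) * norm (ξ + I) ≤ (1/18) * 3 :=
          mul_le_mul hξ h1 (norm_nonneg _) (by norm_num)
      _ = 1/6 := by norm_num
  have hm3 : norm (η^2 + 1) ≤ 1/6 := by
    rw [xi_plus_I_eq η ξ, norm_mul]
    have h1 : norm (η + I) ≤ 3 := by
      calc norm (η + I) = norm ((η - I) + 2*I) := by congr 1; ring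
        _ ≤ norm (η - I) + norm (2*I) := norm_add_le _ _
        _ ≤ 1/18 + 2 := by
            simp only [norm_mul, Complex.norm_I, Complex.norm_two]
            linarith
        _ ≤ 3 := by norm_num
    calc norm (η - I) * norm (η + I) ≤ (1/18) * 3 :=
          mul_le_mul hη h1 (norm_nonneg _) (by norm_num)
      _ = 1/6 := by norm_num
  have hm2 : norm (ξ*η + 1) ≤ 1/6 := by
    rw [xi_eta_eq]
    calc norm (ξ*(η - I) + I*(ξ - I))
        ≤ norm (ξ*(η - I)) + norm (I*(ξ - I)) := norm_add_le _ _
      _ = norm ξ * norm (η - I) + norm (ξ - I) := by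
          simp [norm_mul, Complex.norm_I]
      _ ≤ 2 * (1/18) + 1/18 := by
          have := mul_le_mul hx2 hη (norm_nonneg _) (by norm_num)
          linarith
      _ ≤ 1/6 := by norm_num
  -- A bound
  have hA : norm ((1 + (a:ℂ)) * ζ + (c:ℂ)^2 * (ζ:ℂ)^3) ≤ (1+a+c^2)*ζ := by
    have hcast : ((1 + (a:ℂ)) * ζ + (c:ℂ)^2 * (ζ:ℂ)^3) = ((((1+a)*ζ + c^2*ζ^3 : ℝ)):ℂ) := by
      push_cast; ring
    have h0 : (0:ℝ) ≤ (1+a)*ζ + c^2*ζ^3 := by nlinarith [sq_nonneg c, pow_pos hζ0 3]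
    rw [hcast, Complex.norm_real, Real.norm_eq_abs, _root_.abs_of_nonneg h0]
    have h3 : ζ^3 ≤ ζ := by nlinarith [mul_nonneg (mul_nonneg hζ0.le (by linarith : (0:ℝ) ≤ 1 - ζ)) (by linarith : (0:ℝ) ≤ 1 + ζ)]
    nlinarith [sq_nonneg c]
  -- |E| ≤ b
  have hEb : norm E ≤ b := by
    have e1 : norm E ≤ norm ((ζ:ℂ) * (ξ^3 + ξ^2*η + ξ*η^2 + η^3))
        + norm ((b:ℂ) * ((ξ^2+1) + (ξ*η+1) + (η^2+1)))
        + norm (((1 + (a:ℂ)) * ζ + (c:ℂ)^2 * (ζ:ℂ)^3) * (ξ + η)) := by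
      rw [hE]
      exact le_trans (norm_add_le _ _)
        (by have := norm_add_le ((ζ:ℂ) * (ξ^3 + ξ^2*η + ξ*η^2 + η^3))
              ((b:ℂ) * ((ξ^2+1) + (ξ*η+1) + (η^2+1)))
            linarith)
    have b1 : norm ((ζ:ℂ) * (ξ^3 + ξ^2*η + ξ*η^2 + η^3)) ≤ ζ * 32 := by
      rw [norm_mul, Complex.norm_real, Real.norm_eq_abs, abs_of_pos hζ0]
      exact mul_le_mul_of_nonneg_left hSig hζ0.le
    have b2 : norm ((b:ℂ) * ((ξ^2+1) + (ξ*η+1) + (η^2+1))) ≤ b * (1/2) := by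
      rw [norm_mul, Complex.norm_real, Real.norm_eq_abs, abs_of_pos hb]
      have : norm ((ξ^2+1) + (ξ*η+1) + (η^2+1)) ≤ 1/2 := by
        have u1 := norm_add_le ((ξ^2+1) + (ξ*η+1)) (η^2+1)
        have u2 := norm_add_le (ξ^2+1) (ξ*η+1)
        linarith
      exact mul_le_mul_of_nonneg_left this hb.le
    have b3 : norm (((1 + (a:ℂ)) * ζ + (c:ℂ)^2 * (ζ:ℂ)^3) * (ξ + η)) ≤ (1+a+c^2)*ζ*4 := by
      rw [norm_mul]
      have h4 : norm (ξ + η) ≤ 4 := by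
        have := norm_add_le ξ η
        linarith
      have h0 : (0:ℝ) ≤ norm ((1 + (a:ℂ)) * ζ + (c:ℂ)^2 * (ζ:ℂ)^3) := norm_nonneg _
      have h5 : (0:ℝ) ≤ (1+a+c^2)*ζ := by nlinarith [sq_nonneg c]
      calc norm ((1 + (a:ℂ)) * ζ + (c:ℂ)^2 * (ζ:ℂ)^3) * norm (ξ + η)
          ≤ ((1+a+c^2)*ζ) * 4 := mul_le_mul hA h4 (norm_nonneg _) h5
        _ = (1+a+c^2)*ζ*4 := by ring
    nlinarith
  -- conclude
  have h2b : norm (-2*(b:ℂ)) = 2*b := by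
    have : (-2*(b:ℂ)) = ((-(2*b) : ℝ):ℂ) := by push_cast; ring
    rw [this, Complex.norm_real, Real.norm_eq_abs, abs_neg, abs_of_pos (by linarith)]
  have htri : norm (-2*(b:ℂ)) ≤ norm Q + norm E := by
    have hqe : (-2*(b:ℂ)) = Q + (-E) := by rw [hQE]; ring
    rw [hqe]
    exact le_trans (norm_add_le _ _) (by rw [norm_neg])
  rw [h2b] at htri
  linarith

lemma exists_root_near_s6 (a b c : ℝ) (ha : 0 < a) (hb : 0 < b) (ζ : ℝ)
    (hζ0 : 0 < ζ) (hζ1 : ζ ≤ 1) (hζ2 : ζ * (32 + 4*(1+a+c^2)) ≤ b/2)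
    (hζ3 : c^2 * ζ^2 ≤ (1/18)^4) :
    ∃ r : ℂ, hpoly a b c ζ r = 0 ∧ norm (r - I) ≤ c^2 * ζ^3 / b := by
  have hζne : ζ ≠ 0 := ne_of_gt hζ0
  obtain ⟨r, hroot, hrnear⟩ : ∃ r : ℂ, hpoly a b c ζ r = 0 ∧ norm (r - I) ≤ 1/18 := by
    set P := Ppoly a b c ζ with hP
    have hdeg : P.natDegree = 4 := natDegree_Ppoly a b c ζ hζne
    have hPne : P ≠ 0 := fun h => by simp [h] at hdeg
    have hsplit : P.Splits := IsAlgClosed.splits P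
    have hcard : Multiset.card P.roots = 4 := by
      have h1 := hsplit.natDegree_eq_card_roots
      rw [← h1, hdeg]
    -- the factorization, evaluated at I
    have heval : hpoly a b c ζ I = (ζ:ℂ) * ((P.roots.map (fun x => I - x)).prod) := by
      rw [← eval_Ppoly a b c ζ I, ← hP]
      conv_lhs => rw [hsplit.eq_prod_roots]
      rw [Polynomial.eval_mul, Polynomial.eval_C, leadingCoeff_Ppoly a b c ζ hζne,
        Polynomial.eval_multiset_prod, Multiset.map_map]
      simp [Function.comp]
    have habsprod : (c^2 * ζ^3 : ℝ) = ζ * ((P.roots.map (fun x => norm (I - x))).prod) := by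
      have h1 : norm (hpoly a b c ζ I) = c^2*ζ^3 := by
        rw [hpoly_I]
        have h2 : (-((c:ℂ)^2 * (ζ:ℂ)^3)) = ((-(c^2*ζ^3) : ℝ):ℂ) := by push_cast; ring
        rw [h2, Complex.norm_real, Real.norm_eq_abs, abs_neg, _root_.abs_of_nonneg (by positivity)]
      rw [← h1, heval, norm_mul, Complex.norm_real, Real.norm_eq_abs, _root_.abs_of_pos hζ0,
        abs_multiset_prod, Multiset.map_map]
      simp [Function.comp]
    -- choose the closest root
    have hne0 : P.roots ≠ 0 := by
      intro h0; rw [h0] at hcard; simp at hcard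
    have hne : P.roots.toFinset.Nonempty := by
      rw [Multiset.toFinset_nonempty]; exact hne0
    obtain ⟨r, hrF, hrmin⟩ := P.roots.toFinset.exists_min_image (fun x => norm (I - x)) hne
    have hrR : r ∈ P.roots := Multiset.mem_toFinset.mp hrF
    have hpow : (norm (I - r))^4 ≤ (P.roots.map (fun x => norm (I - x))).prod := by
      have h2 : ∀ y ∈ P.roots.map (fun x => norm (I - x)), norm (I - r) ≤ y := by
        intro y hy
        obtain ⟨x, hx, rfl⟩ := Multiset.mem_map.mp hy
        exact hrmin x (Multiset.mem_toFinset.mpr hx)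
      have h3 := pow_card_le_prod_real _ (norm (I - r)) (norm_nonneg _) h2
      rwa [Multiset.card_map, hcard] at h3
    -- conclude closeness
    have hprodval : ((P.roots.map (fun x => norm (I - x))).prod) = c^2*ζ^2 := by
      have h4 : ζ * ((P.roots.map (fun x => norm (I - x))).prod) = ζ * (c^2*ζ^2) := by
        rw [← habsprod]; ring
      exact mul_left_cancel₀ hζne h4
    have h5 : (norm (I - r))^4 ≤ (1/18)^4 := by
      rw [hprodval] at hpow; linarith
    have h6 : norm (I - r) ≤ 1/18 :=
      le_of_pow_le_pow_left₀ (by norm_num) (by norm_num) h5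
    refine ⟨r, ?_, ?_⟩
    · rw [← eval_Ppoly]; exact Polynomial.isRoot_of_mem_roots hrR
    · rwa [norm_sub_rev]
  -- refine the bound using the divided difference
  refine ⟨r, hroot, ?_⟩
  have hQ := Qlb a b c ha hb ζ I r hζ0 hζ1 hζ2 (by simp) hrnear
  have hsub := hpoly_sub a b c ζ I r
  rw [hroot, sub_zero, hpoly_I] at hsub
  have habs : c^2 * ζ^3 = norm (I - r) *
      norm ((ζ:ℂ) * (I^3 + I^2*r + I*r^2 + r^3) + (b:ℂ) * (I^2 + I*r + r^2)
        + ((1 + (a:ℂ)) * ζ + (c:ℂ)^2 * (ζ:ℂ)^3) * (I + r) + b) := by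
    rw [← norm_mul, ← hsub]
    have h2 : (-((c:ℂ)^2 * (ζ:ℂ)^3)) = ((-(c^2*ζ^3) : ℝ):ℂ) := by push_cast; ring
    rw [h2, Complex.norm_real, Real.norm_eq_abs, abs_neg, _root_.abs_of_nonneg (by positivity)]
  have h7 : norm (I - r) * b ≤ c^2 * ζ^3 := by
    rw [habs]
    exact mul_le_mul_of_nonneg_left hQ (norm_nonneg _)
  rw [norm_sub_rev, le_div_iff₀ hb]
  exact h7


theorem stmt6 (a b c : ℝ) (ha : 0 < a) (hb : 0 < b) :
    ∃ K > (0 : ℝ), ∃ ζ₀ > (0 : ℝ), ∀ ζ : ℝ, 0 < ζ → ζ ≤ ζ₀ →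
      (∃ ξ₁ : ℂ, (‖ξ₁ - Complex.I‖ ≤ K * ζ ∧ hpoly a b c ζ ξ₁ = 0 ∧
          deriv (hpoly a b c ζ) ξ₁ ≠ 0) ∧
        ∀ ξ : ℂ, ‖ξ - Complex.I‖ ≤ K * ζ → hpoly a b c ζ ξ = 0 → ξ = ξ₁) ∧
      (∃ ξ₂ : ℂ, (‖ξ₂ + Complex.I‖ ≤ K * ζ ∧ hpoly a b c ζ ξ₂ = 0 ∧
          deriv (hpoly a b c ζ) ξ₂ ≠ 0) ∧
        ∀ ξ : ℂ, ‖ξ + Complex.I‖ ≤ K * ζ → hpoly a b c ζ ξ = 0 → ξ = ξ₂) := by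

  set M : ℝ := 32 + 4*(1+a+c^2) with hM
  have hMpos : 0 < M := by rw [hM]; nlinarith [sq_nonneg c]
  set K : ℝ := c^2/b + 1 with hK
  have hKpos : 0 < K := by rw [hK]; positivity
  set ζ₀ : ℝ := min (min 1 (b/(2*M))) (min ((1/18)/K) ((1/18)^2/(|c|+1))) with hζ₀
  have hζ₀pos : 0 < ζ₀ := by
    rw [hζ₀]
    have h1 : (0:ℝ) < b/(2*M) := by positivity
    have h2 : (0:ℝ) < (1/18)/K := by positivity
    have h3 : (0:ℝ) < (1/18)^2/(|c|+1) := by positivity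
    simp only [lt_min_iff]
    exact ⟨⟨one_pos, h1⟩, h2, h3⟩
  refine ⟨K, hKpos, ζ₀, hζ₀pos, fun ζ hζ0 hζle => ?_⟩
  -- derive the individual bounds
  have hζ1 : ζ ≤ 1 := le_trans hζle (le_trans (min_le_left _ _) (min_le_left _ _))
  have hζbM : ζ ≤ b/(2*M) := le_trans hζle (le_trans (min_le_left _ _) (min_le_right _ _))
  have hζK : ζ ≤ (1/18)/K := le_trans hζle (le_trans (min_le_right _ _) (min_le_left _ _))
  have hζc : ζ ≤ (1/18)^2/(|c|+1) := le_trans hζle (le_trans (min_le_right _ _) (min_le_right _ _))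
  have hζ2 : ζ * (32 + 4*(1+a+c^2)) ≤ b/2 := by
    have h1 : ζ * M ≤ (b/(2*M)) * M := mul_le_mul_of_nonneg_right hζbM hMpos.le
    have h2 : (b/(2*M)) * M = b/2 := by field_simp
    rw [← hM]; linarith
  have hKζ : K * ζ ≤ 1/18 := by
    have h1 : K * ζ ≤ K * ((1/18)/K) := mul_le_mul_of_nonneg_left hζK hKpos.le
    have h2 : K * ((1/18)/K) = 1/18 := by field_simp; try ring
    linarith
  have hζ3 : c^2 * ζ^2 ≤ (1/18)^4 := by
    have hc0 : (0:ℝ) ≤ |c| := abs_nonneg c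
    have h1 : |c| * ζ ≤ |c| * ((1/18)^2/(|c|+1)) := mul_le_mul_of_nonneg_left hζc hc0
    have h2 : |c| * ((1/18)^2/(|c|+1)) ≤ (1/18)^2 := by
      have hpos : (0:ℝ) < |c| + 1 := by linarith
      rw [← mul_div_assoc, div_le_iff₀ hpos]
      nlinarith
    have h4 : |c| * ζ ≤ (1/18)^2 := le_trans h1 h2
    have h5 : c^2 * ζ^2 = (|c| * ζ)^2 := by rw [mul_pow, _root_.sq_abs]
    rw [h5]
    calc (|c| * ζ)^2 ≤ ((1/18)^2)^2 :=
          pow_le_pow_left₀ (by positivity) h4 2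
      _ = (1/18)^4 := by norm_num
  -- get the root near I
  obtain ⟨r, hroot, hrclose⟩ := exists_root_near_s6 a b c ha hb ζ hζ0 hζ1 hζ2 hζ3
  have hζ3le : ζ^3 ≤ ζ := by
    nlinarith [mul_nonneg (mul_nonneg hζ0.le (by linarith : (0:ℝ) ≤ 1 - ζ)) (by linarith : (0:ℝ) ≤ 1 + ζ)]
  have hrK : norm (r - I) ≤ K * ζ := by
    have h1 : c^2 * ζ^3 / b ≤ K * ζ := by
      have hKb : K * ζ * b = c^2 * ζ + b * ζ := by
        rw [hK]; field_simp
      rw [div_le_iff₀ hb, hKb]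
      have h2 : c^2 * ζ^3 ≤ c^2 * ζ := mul_le_mul_of_nonneg_left hζ3le (sq_nonneg c)
      have h3 : (0:ℝ) ≤ b * ζ := by positivity
      linarith
    exact le_trans hrclose h1
  have hr18 : norm (r - I) ≤ 1/18 := le_trans hrK hKζ
  -- derivative nonzero at r
  have hderiv : deriv (hpoly a b c ζ) r ≠ 0 := by
    have h1 := Qlb a b c ha hb ζ r r hζ0 hζ1 hζ2 hr18 hr18
    have hd := deriv_hpoly a b c ζ r
    intro h0
    rw [h0] at hd
    rw [← hd] at h1
    simp at h1
    linarith
  -- uniqueness near I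
  have huniq : ∀ ξ : ℂ, norm (ξ - I) ≤ K * ζ → hpoly a b c ζ ξ = 0 → ξ = r := by
    intro ξ hx hxz
    have hQ := Qlb a b c ha hb ζ ξ r hζ0 hζ1 hζ2 (le_trans hx hKζ) hr18
    have hs := hpoly_sub a b c ζ ξ r
    rw [hxz, hroot, sub_self] at hs
    rcases mul_eq_zero.mp hs.symm with h | h
    · exact sub_eq_zero.mp h
    · rw [h] at hQ; simp at hQ; linarith
  constructor
  · exact ⟨r, ⟨hrK, hroot, hderiv⟩, huniq⟩
  -- conjugate root near -I
  · refine ⟨(starRingEnd ℂ) r, ⟨?_, ?_, ?_⟩, ?_⟩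
    · have h1 : (starRingEnd ℂ) r + I = (starRingEnd ℂ) (r - I) := by
        simp [map_sub, Complex.conj_I]
      rw [h1, Complex.norm_conj]
      exact hrK
    · rw [hpoly_conj, hroot, map_zero]
    · have h2 : deriv (hpoly a b c ζ) ((starRingEnd ℂ) r)
          = (starRingEnd ℂ) (deriv (hpoly a b c ζ) r) := by
        rw [deriv_hpoly, deriv_hpoly]
        simp [map_add, map_mul, map_pow, Complex.conj_ofReal]
      rw [h2]
      intro h0
      apply hderiv
      have h3 := congrArg (starRingEnd ℂ) h0
      rwa [Complex.conj_conj, map_zero] at h3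
    · intro ξ hx hxz
      have h1 : (starRingEnd ℂ) ξ - I = (starRingEnd ℂ) (ξ + I) := by
        simp [map_add, Complex.conj_I, sub_eq_add_neg]
      have h2 : norm ((starRingEnd ℂ) ξ - I) ≤ K * ζ := by
        rw [h1, Complex.norm_conj]; exact hx
      have h3 : hpoly a b c ζ ((starRingEnd ℂ) ξ) = 0 := by
        rw [hpoly_conj, hxz, map_zero]
      have h4 := huniq _ h2 h3
      have h5 := congrArg (starRingEnd ℂ) h4
      rwa [Complex.conj_conj] at h5
end

section
/- Let a > 0, b > 0 and c ∈ ℝ. Let (μ_k) be a sequence of positive real numbers tending to +∞ and let (ε_k) be a bounded sequence of complex numbers such that P_{μ_k}(i·μ_k + ε_k) = 0 for every k. Then μ_k²·ε_k → −c²/(2b) as k → ∞. The same conclusion holds if instead P_{μ_k}(−i·μ_k + ε_k) = 0 for every k. -/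
open Complex Filter

lemma stmt7_aux (a b c : ℝ) (hb : 0 < b)
    (μ : ℕ → ℝ) (hμpos : ∀ k, 0 < μ k) (hμ : Tendsto μ atTop atTop)
    (ε : ℕ → ℂ) (hbdd : ∃ M : ℝ, ∀ k, ‖ε k‖ ≤ M)
    (s : ℂ) (hs : s ^ 2 = -1)
    (hroot : ∀ k, charP a b c (μ k) (s * (μ k : ℂ) + ε k) = 0) :
    Tendsto (fun k => ((μ k : ℂ)) ^ 2 * ε k) atTop
      (nhds (-(c : ℂ) ^ 2 / (2 * (b : ℂ)))) := by
  obtain ⟨M, hM⟩ := hbdd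
  have hm : ∀ k, ((μ k : ℝ) : ℂ) ≠ 0 := fun k => Complex.ofReal_ne_zero.mpr (hμpos k).ne'
  set u : ℕ → ℂ := fun k => ε k / (μ k : ℂ) with hu_def
  set w : ℕ → ℂ := fun k => 1 / (μ k : ℂ) with hw_def
  have hu : Tendsto u atTop (nhds 0) := by
    refine squeeze_zero_norm (fun k => ?_) (tendsto_const_nhds.div_atTop hμ (a := M))
    simp only [hu_def, norm_div, Complex.norm_real]
    rw [Real.norm_of_nonneg (hμpos k).le]
    refine div_le_div_of_nonneg_right ?_ (hμpos k).le
    exact hM k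
  have hw : Tendsto w atTop (nhds 0) := by
    refine squeeze_zero_norm (fun k => ?_) (tendsto_const_nhds.div_atTop hμ (a := (1 : ℝ)))
    simp only [hw_def, norm_div, Complex.norm_real, norm_one]
    rw [Real.norm_of_nonneg (hμpos k).le]
  set v : ℕ → ℂ := fun k => s + u k with hv_def
  have hv : Tendsto v atTop (nhds s) := by
    simpa using tendsto_const_nhds.add hu
  set A : ℕ → ℂ := fun k => u k + 2 * s with hA_def
  set B : ℕ → ℂ := fun k => (v k) ^ 2 * w k + (b : ℂ) * v k + (a : ℂ) * w k with hB_def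
  set C : ℕ → ℂ := fun k => (v k) ^ 2 with hC_def
  have hA : Tendsto A atTop (nhds (2 * s)) := by
    simpa using hu.add (tendsto_const_nhds (x := 2 * s))
  have hB : Tendsto B atTop (nhds ((b : ℂ) * s)) := by
    have := (((hv.pow 2).mul hw).add ((tendsto_const_nhds (x := (b:ℂ))).mul hv)).add
      ((tendsto_const_nhds (x := (a:ℂ))).mul hw)
    simpa using this
  have hC : Tendsto C atTop (nhds (-1)) := by
    have := hv.pow 2
    rwa [hs] at this
  have hAB : Tendsto (fun k => A k * B k) atTop (nhds (-(2 * (b : ℂ)))) := by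
    have h2 : (2 * s) * ((b : ℂ) * s) = -(2 * (b : ℂ)) := by linear_combination 2 * b * hs
    have := hA.mul hB
    rwa [h2] at this
  have hb' : (b : ℂ) ≠ 0 := Complex.ofReal_ne_zero.mpr hb.ne'
  have hABne : -(2 * (b : ℂ)) ≠ 0 := by simp [hb']
  have key : ∀ k, ((μ k : ℂ)) ^ 2 * ε k * (A k * B k) = -(c : ℂ) ^ 2 * C k := by
    intro k
    have h0 := hroot k
    simp only [charP] at h0
    have hmk := hm k
    have base : ε k * (ε k + 2 * s * (μ k : ℂ)) *
        ((s * (μ k : ℂ) + ε k) ^ 2 + (b : ℂ) * (μ k : ℂ) ^ 2 * (s * (μ k : ℂ) + ε k)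
          + (a : ℂ) * (μ k : ℂ) ^ 2) + (c : ℂ) ^ 2 * (s * (μ k : ℂ) + ε k) ^ 2 = 0 := by
      linear_combination h0 - (μ k : ℂ) ^ 2 *
        ((s * (μ k : ℂ) + ε k) ^ 2 + (b : ℂ) * (μ k : ℂ) ^ 2 * (s * (μ k : ℂ) + ε k)
          + (a : ℂ) * (μ k : ℂ) ^ 2) * hs
    simp only [hA_def, hB_def, hC_def, hv_def, hu_def, hw_def]
    field_simp [hmk]
    linear_combination base
  have hne : ∀ᶠ k in atTop, A k * B k ≠ 0 := hAB.eventually_ne hABne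
  have heq : ∀ᶠ k in atTop, ((μ k : ℂ)) ^ 2 * ε k = -(c : ℂ) ^ 2 * C k / (A k * B k) :=
    hne.mono fun k hk => by rw [eq_div_iff hk]; exact key k
  rw [tendsto_congr' heq]
  have hlim := ((tendsto_const_nhds (x := -(c : ℂ) ^ 2)).mul hC).div hAB hABne
  have heval : -(c : ℂ) ^ 2 * -1 / -(2 * (b : ℂ)) = -(c : ℂ) ^ 2 / (2 * (b : ℂ)) := by
    field_simp
  rwa [heval] at hlim

theorem stmt7 (a b c : ℝ) (ha : 0 < a) (hb : 0 < b)
    (μ : ℕ → ℝ) (hμpos : ∀ k, 0 < μ k) (hμ : Tendsto μ atTop atTop)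
    (ε : ℕ → ℂ) (hbdd : ∃ M : ℝ, ∀ k, ‖ε k‖ ≤ M)
    (hroot : (∀ k, charP a b c (μ k) (Complex.I * (μ k : ℂ) + ε k) = 0) ∨
             (∀ k, charP a b c (μ k) (-(Complex.I) * (μ k : ℂ) + ε k) = 0)) :
    Tendsto (fun k => ((μ k : ℂ)) ^ 2 * ε k) atTop
      (nhds (-(c : ℂ) ^ 2 / (2 * (b : ℂ)))) := by
  rcases hroot with h | h
  · exact stmt7_aux a b c hb μ hμpos hμ ε hbdd Complex.I (by simp [Complex.I_sq]) h
  · exact stmt7_aux a b c hb μ hμpos hμ ε hbdd (-Complex.I)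
      (by rw [neg_pow]; simp [Complex.I_sq]) h
end

section
/- Let a > 0, b > 0, c ≠ 0 be real numbers and let μ > 0. Then every complex root λ of the characteristic polynomial P_μ satisfies Re λ < 0, i.e. all roots of P_μ lie in the open left half-plane. -/
open Complex

set_option maxHeartbeats 1600000 in
theorem stmt9 (a b c : ℝ) (ha : 0 < a) (hb : 0 < b) (hc : c ≠ 0) (μ : ℝ) (hμ : 0 < μ) :
    ∀ l : ℂ, charP a b c μ l = 0 → l.re < 0 := by
  intro l hl
  unfold charP at hl
  by_contra h
  push_neg at h
  have hl0 : l ≠ 0 := by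
    rintro rfl
    simp only [ne_eq, zero_pow, mul_zero, zero_add, add_zero, mul_one] at hl
    norm_num at hl
    rcases hl with h1 | h2
    · exact ha.ne' (by exact_mod_cast h1)
    · exact hμ.ne' (by exact_mod_cast h2)
  have key : (l + (μ:ℂ)^2 / l) * (l + (b:ℂ)*(μ:ℂ)^2 + (a:ℂ)*(μ:ℂ)^2 / l)
      = -(c:ℂ)^2 := by
    field_simp
    linear_combination hl
  have hnsq : 0 < Complex.normSq l := Complex.normSq_pos.mpr hl0
  have hre := congrArg Complex.re key
  have him := congrArg Complex.im key
  simp only [Complex.add_re, Complex.add_im, Complex.mul_re, Complex.mul_im,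
    Complex.div_re, Complex.div_im, Complex.ofReal_re, Complex.ofReal_im,
    Complex.neg_re, Complex.neg_im, Complex.ofReal_pow,
    pow_two, Complex.mul_re, Complex.mul_im] at hre him
  norm_num at hre him
  set x := l.re with hxdef
  set y := l.im with hydef
  set n := Complex.normSq l with hndef
  have hx : 0 ≤ x := h
  have hre' : (x + μ^2 * x / n) * (x + b * μ^2 + a * μ^2 * x / n)
      - (y - μ^2 * y / n) * (y - a * μ^2 * y / n) = -c^2 := by
    linear_combination hre
  have him' : (x + μ^2 * x / n) * (y - a * μ^2 * y / n)
      + (y - μ^2 * y / n) * (x + b * μ^2 + a * μ^2 * x / n) = 0 := by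
    linear_combination him
  set p := x + μ^2 * x / n with hp
  set q := y - μ^2 * y / n with hq
  set r := x + b * μ^2 + a * μ^2 * x / n with hr
  set s := y - a * μ^2 * y / n with hs
  clear_value x y n p q r s
  have t1 : 0 ≤ μ^2 * x / n := div_nonneg (mul_nonneg (sq_nonneg μ) hx) hnsq.le
  have t2 : 0 ≤ a * μ^2 * x / n :=
    div_nonneg (mul_nonneg (mul_nonneg ha.le (sq_nonneg μ)) hx) hnsq.le
  have hbμ : 0 < b * μ^2 := by positivity
  have hp0 : 0 ≤ p := by rw [hp]; linarith
  have hr0 : 0 < r := by rw [hr]; linarith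
  have hc2 : 0 < c^2 := by positivity
  have e1 : r * (p^2 + q^2) = -(p * c^2) := by
    linear_combination p * hre' + q * him'
  have h1 : p^2 + q^2 ≤ 0 := by
    nlinarith [mul_nonneg hp0 hc2.le]
  have hp' : p = 0 := by nlinarith [sq_nonneg p, sq_nonneg q]
  have hq' : q = 0 := by nlinarith [sq_nonneg p, sq_nonneg q]
  rw [hp', hq'] at hre'
  nlinarith [hre', hc2]
end

section
/- Let a > 0, b > 0, c ≠ 0 be real numbers and let (μ_k) be a sequence of positive real numbers tending to +∞. Then there exist k₀ ∈ ℕ and a sequence (λ_k)_{k ≥ k₀} of complex numbers such that for every k ≥ k₀: P_{μ_k}(λ_k) = 0 and Re λ_k < 0, while Re λ_k → 0 and |λ_k| → +∞ as k → ∞. In particular, the characteristic roots of the family {P_{μ_k}} come arbitrarily close to the imaginary axis as k → ∞ while remaining in the open left half-plane. -/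
set_option maxHeartbeats 1000000

open Polynomial


open Complex Filter

namespace Complex
noncomputable def abs : AbsoluteValue ℂ ℝ where
  toFun := norm
  map_mul' := norm_mul
  nonneg' := norm_nonneg
  eq_zero' _ := norm_eq_zero
  add_le' := norm_add_le
lemma abs_def' (z : ℂ) : abs z = ‖z‖ := rfl
@[simp] lemma abs_ofReal (r : ℝ) : abs (r : ℂ) = |r| := by
  show ‖(r : ℂ)‖ = |r|; simp
@[simp] lemma abs_I : abs I = 1 := by show ‖I‖ = 1; simp
@[simp] lemma abs_two : abs (2 : ℂ) = 2 := by show ‖(2 : ℂ)‖ = 2; simp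
lemma abs_re_le_abs (z : ℂ) : |z.re| ≤ abs z := abs_re_le_norm z
lemma re_le_abs (z : ℂ) : z.re ≤ abs z := re_le_norm z
end Complex

lemma charP_eq (a b c μ : ℝ) (r : ℂ) :
    charP a b c μ r = (r - μ*I)*((r - μ*I) + 2*μ*I)*(r^2 + b*μ^2*r + a*μ^2) + c^2*r^2 := by
  unfold _root_.charP
  linear_combination ((μ:ℂ)^2*(r^2 + (b:ℂ)*(μ:ℂ)^2*r + (a:ℂ)*(μ:ℂ)^2)) * Complex.I_sq


noncomputable def charPoly (a b c μ : ℝ) : Polynomial ℂ :=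
  X^4 + C ((b:ℂ)*(μ:ℂ)^2) * X^3 + C ((1+(a:ℂ))*(μ:ℂ)^2 + (c:ℂ)^2) * X^2 + C ((b:ℂ)*(μ:ℂ)^4) * X + C ((a:ℂ)*(μ:ℂ)^4)

lemma charPoly_eval (a b c μ : ℝ) (z : ℂ) : (charPoly a b c μ).eval z = charP a b c μ z := by
  simp [charPoly, _root_.charP]

lemma charPoly_monic (a b c μ : ℝ) : (charPoly a b c μ).Monic := by
  unfold charPoly; monicity!

lemma charPoly_natDegree (a b c μ : ℝ) : (charPoly a b c μ).natDegree = 4 := by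
  unfold charPoly; compute_degree!

lemma charP_at_I (a b c μ : ℝ) :
    charP a b c μ ((μ:ℂ)*I) = -((c:ℂ)^2*(μ:ℂ)^2) := by
  unfold _root_.charP
  linear_combination ((μ:ℂ)^4*Complex.I^2 + (a:ℂ)*(μ:ℂ)^4 + (b:ℂ)*(μ:ℂ)^5*Complex.I + (c:ℂ)^2*(μ:ℂ)^2) * Complex.I_sq

lemma multiset_pow_card_lt_prod (A : ℝ) (hA : 0 ≤ A) (s : Multiset ℝ) (hs : s ≠ 0)
    (h : ∀ x ∈ s, A < x) : A ^ Multiset.card s < s.prod := by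
  induction s using Multiset.induction with
  | empty => exact absurd rfl hs
  | cons y t ih =>
    have h1 := h y (Multiset.mem_cons_self _ _)
    simp only [Multiset.prod_cons, Multiset.card_cons]
    by_cases ht : t = 0
    · subst ht; simpa using h1
    · have h2 := ih ht (fun x hx => h x (Multiset.mem_cons_of_mem hx))
      have hA2 : (0:ℝ) ≤ A ^ Multiset.card t := pow_nonneg hA _
      calc A ^ (Multiset.card t + 1) = A * A ^ Multiset.card t := by ring
      _ < y * t.prod := mul_lt_mul'' h1 h2 hA hA2

lemma multiset_prod_map_pow (s : Multiset ℝ) (n : ℕ) :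
    (s.map (fun x => x ^ n)).prod = s.prod ^ n := by
  induction s using Multiset.induction with
  | empty => simp
  | cons y t ih => simp [Multiset.map_cons, Multiset.prod_cons, mul_pow, ih]

lemma exists_root_close (a b c μ : ℝ) :
    ∃ r : ℂ, charP a b c μ r = 0 ∧ (Complex.abs (r - μ*I))^4 ≤ c^2*μ^2 := by
  by_contra hcon
  push_neg at hcon
  have hmon := charPoly_monic a b c μ
  have hfac := (IsAlgClosed.splits (charPoly a b c μ)).eq_prod_roots_of_monic hmon
  have hcard : Multiset.card (charPoly a b c μ).roots = 4 := by
    rw [splits_iff_card_roots.mp (IsAlgClosed.splits (charPoly a b c μ)), charPoly_natDegree]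
  -- eval at μ I
  have heval : (charPoly a b c μ).eval ((μ:ℂ)*I) = ((charPoly a b c μ).roots.map (fun x => (μ:ℂ)*I - x)).prod := by
    conv_lhs => rw [hfac]
    rw [eval_multiset_prod, Multiset.map_map]
    simp
  have habs : ((charPoly a b c μ).roots.map (fun x => Complex.abs ((μ:ℂ)*I - x))).prod = c^2*μ^2 := by
    have h1 : Complex.abs ((charPoly a b c μ).eval ((μ:ℂ)*I)) = c^2*μ^2 := by
      rw [charPoly_eval, charP_at_I]
      simp [map_mul, map_pow, Complex.abs_ofReal, _root_.sq_abs]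
    rw [heval] at h1
    rw [← h1, map_multiset_prod Complex.abs, Multiset.map_map]
    rfl
  -- all roots are far
  have hfar : ∀ y ∈ (charPoly a b c μ).roots.map (fun x => Complex.abs ((μ:ℂ)*I - x)) |>.map (fun x => x ^ 4),
      c^2*μ^2 < y := by
    intro y hy
    simp only [Multiset.map_map, Multiset.mem_map, Function.comp] at hy
    obtain ⟨x, hx, rfl⟩ := hy
    have hroot : charP a b c μ x = 0 := by
      have := (mem_roots (hmon.ne_zero)).mp hx
      rw [← charPoly_eval]; exact this
    have := hcon x hroot
    have hsym : Complex.abs ((μ:ℂ)*I - x) = Complex.abs (x - (μ:ℂ)*I) := by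
      rw [← neg_sub, map_neg_eq_map]
    rw [hsym]; exact this
  have hne : ((charPoly a b c μ).roots.map (fun x => Complex.abs ((μ:ℂ)*I - x))).map (fun x => x ^ 4) ≠ 0 := by
    intro h
    have := congrArg Multiset.card h
    simp [hcard] at this
  have hlt := multiset_pow_card_lt_prod (c^2*μ^2) (by positivity) _ hne hfar
  rw [multiset_prod_map_pow, habs] at hlt
  simp only [Multiset.card_map, hcard] at hlt
  exact lt_irrefl _ hlt

lemma key (a b c : ℝ) (ha : 0 < a) (hb : 0 < b) (hc : c ≠ 0) (μ : ℝ)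
    (hμ : 1 + 4*|c| + (9+4*a)/b + 300*c^2/b^2 + 20*|a - 1|/b + 72*c^2/b ≤ μ) :
    ∃ r : ℂ, charP a b c μ r = 0 ∧ r.re < 0 ∧ Complex.abs (r - μ*I) < c^2/(b*μ^2) := by
  set aa := |a - 1| with haadef
  have hc2 : (0:ℝ) < c^2 := by positivity
  have t1 : (0:ℝ) ≤ 4*|c| := by positivity
  have t2 : (0:ℝ) ≤ (9+4*a)/b := by positivity
  have t3 : (0:ℝ) ≤ 300*c^2/b^2 := by positivity
  have t4 : (0:ℝ) ≤ 20*aa/b := by positivity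
  have t5 : (0:ℝ) ≤ 72*c^2/b := by positivity
  have hμ1 : (1:ℝ) ≤ μ := by linarith
  have hμpos : (0:ℝ) < μ := by linarith
  have hμ4 : μ ≤ μ^4 := by nlinarith [sq_nonneg μ, sq_nonneg (μ-1), sq_nonneg (μ^2-1)]
  have hμ3 : μ ≤ μ^3 := by nlinarith [sq_nonneg μ, sq_nonneg (μ-1)]
  have h1 : 16*c^2 ≤ μ^2 := by
    have h4c : 4*|c| ≤ μ := by linarith
    nlinarith [abs_nonneg c, _root_.sq_abs c]
  have h2 : 9 + 4*a ≤ b*μ := by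
    have : (9+4*a)/b ≤ μ := by linarith
    calc 9 + 4*a = ((9+4*a)/b)*b := by field_simp
    _ ≤ μ*b := mul_le_mul_of_nonneg_right this hb.le
    _ = b*μ := by ring
  have h3 : 300*c^2 < b^2*μ^4 := by
    have e1 : 300*c^2/b^2 < μ := by linarith
    have e2 : 300*c^2 < b^2*μ := by
      calc 300*c^2 = (300*c^2/b^2)*b^2 := by field_simp
      _ < μ*b^2 := by apply mul_lt_mul_of_pos_right e1; positivity
      _ = b^2*μ := by ring
    nlinarith [sq_nonneg b]
  have h4 : 20*aa < b*μ := by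
    have e1 : 20*aa/b < μ := by linarith
    calc 20*aa = (20*aa/b)*b := by field_simp
    _ < μ*b := by apply mul_lt_mul_of_pos_right e1 hb
    _ = b*μ := by ring
  have h5 : 72*c^2 < b*μ^3 := by
    have e1 : 72*c^2/b < μ := by linarith
    have e2 : 72*c^2 < b*μ := by
      calc 72*c^2 = (72*c^2/b)*b := by field_simp
      _ < μ*b := by apply mul_lt_mul_of_pos_right e1 hb
      _ = b*μ := by ring
    nlinarith
  obtain ⟨r, hroot, hr4⟩ := exists_root_close a b c μ
  set x := Complex.abs (r - μ*I) with hxdef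
  have hx0 : 0 ≤ x := Complex.abs.nonneg _
  have hx2 : x ≤ μ/2 := by
    have : x^4 ≤ (μ/2)^4 := by nlinarith
    exact le_of_pow_le_pow_left₀ (by norm_num) (by positivity) this
  have habsμI : Complex.abs ((μ:ℂ)*I) = μ := by
    simp [Complex.abs_ofReal, abs_of_pos hμpos]
  -- bounds on |r|
  have hR_le : Complex.abs r ≤ 3/2*μ := by
    have h := Complex.abs.add_le (r - μ*I) ((μ:ℂ)*I)
    simp only [sub_add_cancel] at h
    rw [habsμI] at h
    linarith
  have hR_ge : μ/2 ≤ Complex.abs r := by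
    have h := Complex.abs.add_le ((μ:ℂ)*I - r) r
    simp only [sub_add_cancel] at h
    rw [habsμI] at h
    have : Complex.abs ((μ:ℂ)*I - r) = x := by rw [← neg_sub, map_neg_eq_map]
    rw [this] at h
    linarith
  set A2 := Complex.abs ((r - μ*I) + 2*μ*I) with hA2def
  have hA2_nonneg : 0 ≤ A2 := Complex.abs.nonneg _
  have habs2μI : Complex.abs (2*(μ:ℂ)*I) = 2*μ := by
    simp [Complex.abs_ofReal, abs_of_pos hμpos]
  have he2_le : A2 ≤ 5/2*μ := by
    have h := Complex.abs.add_le (r - μ*I) (2*(μ:ℂ)*I)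
    rw [habs2μI] at h
    linarith
  have he2_ge : 3/2*μ ≤ A2 := by
    have h := Complex.abs.add_le ((r - μ*I) + 2*(μ:ℂ)*I) (-(r - μ*I))
    have e1 : (r - μ*I) + 2*(μ:ℂ)*I + -(r - μ*I) = 2*(μ:ℂ)*I := by ring
    rw [e1, habs2μI, map_neg_eq_map, ← hxdef] at h
    linarith
  set q := Complex.abs (r^2 + (b:ℂ)*μ^2*r + (a:ℂ)*μ^2) with hqdef
  have hq0 : 0 ≤ q := Complex.abs.nonneg _
  have hQ : b*μ^3/4 ≤ q := by
    have e1 : (b:ℂ)*μ^2*r = (r^2 + (b:ℂ)*μ^2*r + (a:ℂ)*μ^2) + (-(r^2)) + (-((a:ℂ)*μ^2)) := by ring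
    have h := Complex.abs.add_le ((r^2 + (b:ℂ)*μ^2*r + (a:ℂ)*μ^2) + (-(r^2))) (-((a:ℂ)*μ^2))
    have h' := Complex.abs.add_le (r^2 + (b:ℂ)*μ^2*r + (a:ℂ)*μ^2) (-(r^2))
    rw [← e1] at h
    have hb1 : Complex.abs ((b:ℂ)*μ^2*r) = b*μ^2*Complex.abs r := by
      simp [map_mul, Complex.abs_ofReal, abs_of_pos hb, abs_of_pos hμpos, map_pow]
      try ring
    have hb2 : Complex.abs (-(r^2)) = (Complex.abs r)^2 := by
      rw [map_neg_eq_map, map_pow]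
    have hb3 : Complex.abs (-((a:ℂ)*μ^2)) = a*μ^2 := by
      rw [map_neg_eq_map]
      simp [map_mul, Complex.abs_ofReal, abs_of_pos ha, abs_of_pos hμpos, map_pow]
    rw [hb1, hb3] at h
    rw [hb2] at h'
    nlinarith [h, h', mul_le_mul_of_nonneg_left hR_ge (show (0:ℝ) ≤ b*μ^2 by positivity),
      pow_le_pow_left₀ (Complex.abs.nonneg r) hR_le 2,
      mul_le_mul_of_nonneg_left h2 (show (0:ℝ) ≤ μ^2/4 by positivity)]
  -- the basic equation
  rw [charP_eq] at hroot
  have hEW : (r - μ*I)*((r - μ*I) + 2*μ*I)*(r^2 + (b:ℂ)*μ^2*r + (a:ℂ)*μ^2) = -((c:ℂ)^2*r^2) := by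
    linear_combination hroot
  have habsc2 : Complex.abs ((c:ℂ)^2) = c^2 := by
    rw [map_pow, Complex.abs_ofReal, _root_.sq_abs]
  have habs_eq : x * A2 * q = c^2 * (Complex.abs r)^2 := by
    have h := congrArg Complex.abs hEW
    simp only [map_mul, map_neg_eq_map, map_pow, Complex.abs_ofReal] at h
    rw [_root_.sq_abs] at h
    exact h
  have hx_eta : x * (b*μ^2) ≤ 6*c^2 := by
    have s1 : x * ((3/2*μ) * (b*μ^3/4)) ≤ x * (A2 * q) := by
      apply mul_le_mul_of_nonneg_left _ hx0
      exact mul_le_mul he2_ge hQ (by positivity) hA2_nonneg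
    have s2 : c^2 * (Complex.abs r)^2 ≤ c^2 * (3/2*μ)^2 := by
      apply mul_le_mul_of_nonneg_left _ hc2.le
      exact pow_le_pow_left₀ (Complex.abs.nonneg r) hR_le 2
    have s3 : x * (A2 * q) = c^2 * (Complex.abs r)^2 := by rw [← habs_eq]; ring
    nlinarith [mul_pos hμpos hμpos]
  -- bound on |r^2 + μ^2|
  have hid : r^2 + (μ:ℂ)^2 = (r - μ*I)*((r - μ*I) + 2*μ*I) := by
    linear_combination ((μ:ℂ)^2) * Complex.I_sq
  have hu : Complex.abs (r^2 + (μ:ℂ)^2) = x * A2 := by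
    rw [hid, map_mul]
  -- the V quantity
  set V := ((r - μ*I) + 2*(μ:ℂ)*I)*(r^2 + (a:ℂ)*(μ:ℂ)^2) - (b:ℂ)*(μ:ℂ)^2*r*(r - (μ:ℂ)*I) with hVdef
  have hVW : (2*(b:ℂ)*(μ:ℂ)^2*(r - μ*I) + (c:ℂ)^2) * (((r - μ*I) + 2*μ*I)*(r^2 + (b:ℂ)*μ^2*r + (a:ℂ)*μ^2)) = (c:ℂ)^2 * V := by
    rw [hVdef]
    linear_combination (2*(b:ℂ)*(μ:ℂ)^2) * hEW
  -- bound |V|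
  have habs_raμ : Complex.abs (r^2 + (a:ℂ)*(μ:ℂ)^2) ≤ x*(5/2*μ) + aa*μ^2 := by
    have e1 : r^2 + (a:ℂ)*(μ:ℂ)^2 = (r^2 + (μ:ℂ)^2) + ((a:ℂ)-1)*(μ:ℂ)^2 := by ring
    have h := Complex.abs.add_le (r^2 + (μ:ℂ)^2) (((a:ℂ)-1)*(μ:ℂ)^2)
    rw [← e1, hu] at h
    have e2 : Complex.abs (((a:ℂ)-1)*(μ:ℂ)^2) = aa*μ^2 := by
      have : ((a:ℂ)-1) = ((a - 1 : ℝ) : ℂ) := by push_cast; ring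
      rw [this, map_mul, Complex.abs_ofReal, map_pow, Complex.abs_ofReal,
        _root_.sq_abs]
    rw [e2] at h
    have : x * A2 ≤ x * (5/2*μ) := mul_le_mul_of_nonneg_left he2_le hx0
    linarith
  have hAV : Complex.abs V ≤ (5/2*μ)*(x*(5/2*μ) + aa*μ^2) + b*μ^2*(3/2*μ)*x := by
    have h := Complex.abs.add_le (((r - μ*I) + 2*(μ:ℂ)*I)*(r^2 + (a:ℂ)*(μ:ℂ)^2)) (-((b:ℂ)*(μ:ℂ)^2*r*(r - (μ:ℂ)*I)))
    have e1 : V = ((r - μ*I) + 2*(μ:ℂ)*I)*(r^2 + (a:ℂ)*(μ:ℂ)^2) + (-((b:ℂ)*(μ:ℂ)^2*r*(r - (μ:ℂ)*I))) := by rw [hVdef]; ring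
    rw [← e1] at h
    have p1 : Complex.abs (((r - μ*I) + 2*(μ:ℂ)*I)*(r^2 + (a:ℂ)*(μ:ℂ)^2)) ≤ (5/2*μ)*(x*(5/2*μ) + aa*μ^2) := by
      rw [map_mul]
      exact mul_le_mul he2_le habs_raμ (Complex.abs.nonneg _) (by positivity)
    have p2 : Complex.abs (-((b:ℂ)*(μ:ℂ)^2*r*(r - (μ:ℂ)*I))) ≤ b*μ^2*(3/2*μ)*x := by
      rw [map_neg_eq_map, map_mul, map_mul, map_mul, map_pow, Complex.abs_ofReal,
        Complex.abs_ofReal, abs_of_pos hb, abs_of_pos hμpos, ← hxdef]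
      have : b * μ^2 * Complex.abs r ≤ b * μ^2 * (3/2*μ) := by
        apply mul_le_mul_of_nonneg_left hR_le; positivity
      exact mul_le_mul_of_nonneg_right this hx0
    linarith
  have hAV_lt : Complex.abs V * (8*b) < 3*b^2*μ^4 := by
    nlinarith [mul_lt_mul_of_pos_right h4 (show (0:ℝ) < b*μ^3 by positivity),
      mul_lt_mul_of_pos_right h5 (show (0:ℝ) < b*μ by positivity),
      mul_le_mul_of_nonneg_left hx_eta (show (0:ℝ) ≤ 50 by norm_num),
      mul_le_mul_of_nonneg_left hx_eta (show (0:ℝ) ≤ 12*b*μ by positivity),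
      Complex.abs.nonneg V]
  have hAW : (3/8)*b*μ^4 ≤ A2 * q := by
    nlinarith [mul_le_mul he2_ge hQ (by positivity : (0:ℝ) ≤ b*μ^3/4) hA2_nonneg]
  have hAWpos : 0 < A2 * q := lt_of_lt_of_le (by positivity) hAW
  have hAVltW : Complex.abs V < A2 * q := by
    have h8 : (0:ℝ) < 8*b := by positivity
    have step : Complex.abs V * (8*b) < (A2*q)*(8*b) := by
      linarith [mul_le_mul_of_nonneg_left hAW h8.le]
    exact lt_of_mul_lt_mul_right step h8.le
  have habs3 : Complex.abs (2*(b:ℂ)*(μ:ℂ)^2*(r - μ*I) + (c:ℂ)^2) * (A2 * q) = c^2 * Complex.abs V := by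
    have h := congrArg Complex.abs hVW
    rw [map_mul, map_mul, map_mul, habsc2] at h
    rw [← hA2def, ← hqdef] at h
    rw [← mul_assoc] at h ⊢
    exact h
  have hsmall : Complex.abs (2*(b:ℂ)*(μ:ℂ)^2*(r - μ*I) + (c:ℂ)^2) < c^2 := by
    have h : Complex.abs (2*(b:ℂ)*(μ:ℂ)^2*(r - μ*I) + (c:ℂ)^2) * (A2 * q) < c^2 * (A2*q) := by
      rw [habs3]
      exact mul_lt_mul_of_pos_left hAVltW hc2
    exact lt_of_mul_lt_mul_right h hAWpos.le
  -- real part negative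
  have hre_eq : (2*(b:ℂ)*(μ:ℂ)^2*(r - μ*I) + (c:ℂ)^2).re = 2*b*μ^2*r.re + c^2 := by
    have e1 : 2*(b:ℂ)*(μ:ℂ)^2*(r - μ*I) + (c:ℂ)^2 = ((2*b*μ^2 : ℝ) : ℂ)*r + (((c^2 : ℝ) : ℂ) - ((2*b*μ^3 : ℝ) : ℂ)*I) := by
      push_cast; ring
    rw [e1]
    simp only [Complex.add_re, Complex.sub_re, Complex.re_ofReal_mul, Complex.ofReal_re,
      Complex.mul_I_re, Complex.ofReal_im, neg_zero, sub_zero]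
  have hre_neg : r.re < 0 := by
    have h := Complex.re_le_abs (2*(b:ℂ)*(μ:ℂ)^2*(r - μ*I) + (c:ℂ)^2)
    rw [hre_eq] at h
    have h2' : 2*b*μ^2*r.re < 0 := by linarith
    by_contra hge
    push_neg at hge
    have : 0 ≤ 2*b*μ^2*r.re := mul_nonneg (by positivity) hge
    linarith
  have hxfinal : x < c^2/(b*μ^2) := by
    have e1 : 2*(b:ℂ)*(μ:ℂ)^2*(r - μ*I) = (2*(b:ℂ)*(μ:ℂ)^2*(r - μ*I) + (c:ℂ)^2) + (-((c:ℂ)^2)) := by ring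
    have h := Complex.abs.add_le (2*(b:ℂ)*(μ:ℂ)^2*(r - μ*I) + (c:ℂ)^2) (-((c:ℂ)^2))
    rw [← e1, map_neg_eq_map, habsc2] at h
    have e2 : Complex.abs (2*(b:ℂ)*(μ:ℂ)^2*(r - μ*I)) = 2*b*μ^2*x := by
      rw [map_mul, map_mul, map_mul, map_pow, Complex.abs_ofReal, Complex.abs_ofReal, ← hxdef]
      simp [abs_of_pos hb, abs_of_pos hμpos]
      try ring
    rw [e2] at h
    rw [lt_div_iff₀ (by positivity : (0:ℝ) < b*μ^2)]
    linarith
  exact ⟨r, by rw [charP_eq]; linear_combination hroot, hre_neg, hxfinal⟩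

theorem stmt10 (a b c : ℝ) (ha : 0 < a) (hb : 0 < b) (hc : c ≠ 0)
    (μ : ℕ → ℝ) (hμpos : ∀ k, 0 < μ k) (hμ : Tendsto μ atTop atTop) :
    ∃ k₀ : ℕ, ∃ l : ℕ → ℂ,
      (∀ k ≥ k₀, charP a b c (μ k) (l k) = 0 ∧ (l k).re < 0) ∧
      Tendsto (fun k => (l k).re) atTop (nhds 0) ∧
      Tendsto (fun k => ‖l k‖) atTop atTop := by
  have hc2 : (0:ℝ) < c^2 := by positivity
  have t1 : (0:ℝ) ≤ 4*|c| := by positivity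
  have t2 : (0:ℝ) ≤ (9+4*a)/b := by positivity
  have t3 : (0:ℝ) ≤ 300*c^2/b^2 := by positivity
  have t4 : (0:ℝ) ≤ 20*|a - 1|/b := by positivity
  have t5 : (0:ℝ) ≤ 72*c^2/b := by positivity
  obtain ⟨k₀, hk₀⟩ := eventually_atTop.mp (hμ.eventually_ge_atTop (1 + 4*|c| + (9+4*a)/b + 300*c^2/b^2 + 20*|a - 1|/b + 72*c^2/b))
  have H : ∀ k, ∃ r : ℂ, 1 + 4*|c| + (9+4*a)/b + 300*c^2/b^2 + 20*|a - 1|/b + 72*c^2/b ≤ μ k →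
      (charP a b c (μ k) r = 0 ∧ r.re < 0 ∧
        Complex.abs (r - (μ k)*I) < c^2/(b*(μ k)^2)) := by
    intro k
    by_cases h : 1 + 4*|c| + (9+4*a)/b + 300*c^2/b^2 + 20*|a - 1|/b + 72*c^2/b ≤ μ k
    · obtain ⟨r, h1, h2, h3⟩ := key a b c ha hb hc (μ k) h
      exact ⟨r, fun _ => ⟨h1, h2, h3⟩⟩
    · exact ⟨0, fun h' => absurd h' h⟩
  choose l hl using H
  have hcb : ∀ k, 1 + 4*|c| + (9+4*a)/b + 300*c^2/b^2 + 20*|a - 1|/b + 72*c^2/b ≤ μ k → c^2/(b*(μ k)^2) ≤ 1 := by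
    intro k hk
    have hμ1 : (1:ℝ) ≤ μ k := by linarith
    have h72 : 72*c^2/b ≤ μ k := by linarith
    rw [div_le_one (by positivity)]
    have : 72*c^2 ≤ b * μ k := by
      calc 72*c^2 = (72*c^2/b)*b := by field_simp
      _ ≤ μ k * b := mul_le_mul_of_nonneg_right h72 hb.le
      _ = b * μ k := by ring
    nlinarith
  refine ⟨k₀, l, ?_, ?_, ?_⟩
  · intro k hk
    obtain ⟨h1, h2, _⟩ := hl k (hk₀ k hk)
    exact ⟨h1, h2⟩
  · have hbound : ∀ᶠ k in atTop, ‖(l k).re‖ ≤ c^2/(b*(μ k)^2) := by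
      filter_upwards [eventually_atTop.mpr ⟨k₀, hk₀⟩] with k hk
      obtain ⟨_, _, h3⟩ := hl k hk
      have hre0 : (l k).re = ((l k) - (μ k : ℂ)*I).re := by
        simp [Complex.sub_re, Complex.mul_I_re]
      calc ‖(l k).re‖ = |((l k) - (μ k : ℂ)*I).re| := by rw [Real.norm_eq_abs, hre0]
      _ ≤ Complex.abs ((l k) - (μ k)*I) := Complex.abs_re_le_abs _
      _ ≤ c^2/(b*(μ k)^2) := h3.le
    have htend : Tendsto (fun k => c^2/(b*(μ k)^2)) atTop (nhds 0) := by
      apply Tendsto.div_atTop tendsto_const_nhds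
      have h2 : Tendsto (fun k => b * (μ k * μ k)) atTop atTop :=
        (hμ.atTop_mul_atTop₀ hμ).const_mul_atTop hb
      simpa [pow_two, mul_assoc] using h2
    exact squeeze_zero_norm' hbound htend
  · have hle : (fun k => μ k - 1) ≤ᶠ[atTop] (fun k => Complex.abs (l k)) := by
      filter_upwards [eventually_atTop.mpr ⟨k₀, hk₀⟩] with k hk
      obtain ⟨_, _, h3⟩ := hl k hk
      have habsμI : Complex.abs ((μ k : ℂ)*I) = μ k := by
        simp [Complex.abs_ofReal, abs_of_pos (hμpos k)]
      have htri := Complex.abs.add_le ((μ k : ℂ)*I - l k) (l k)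
      have e1 : (μ k : ℂ)*I - l k + l k = (μ k : ℂ)*I := by ring
      rw [e1, habsμI] at htri
      have e2 : Complex.abs ((μ k : ℂ)*I - l k) = Complex.abs (l k - (μ k : ℂ)*I) := by
        rw [← neg_sub, map_neg_eq_map]
      rw [e2] at htri
      have := hcb k hk
      linarith [h3.le.trans this]
    have hten : Tendsto (fun k => μ k - 1) atTop atTop := by
      have := tendsto_atTop_add_const_right atTop (-1) hμ
      simpa [sub_eq_add_neg] using this
    exact tendsto_atTop_mono' atTop hle hten
end
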